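/- arXiv:2605.30929 — 5 statements merged into one kernel-verified Lean document; each statement's English description precedes it below -/
import Mathlib

section
/- Let n ≥ 1, let g ∈ GL_n(L), and let a_1 ≤ a_2 ≤ ⋯ ≤ a_n be integers. Then there exist matrices U, V ∈ GL_n(𝒪_L) with g = U · diag(t^{a_1}, …, t^{a_n}) · V if and only if, for every k = 1, …, n, the minimum of v(δ) over all nonzero k×k minors δ of g (determinants of k×k submatrices obtained by choosing k rows and k columns) equals a_1 + a_2 + ⋯ + a_k. -/
/-!
By Cauchy–Binet, the minors of `U * M * V` are `𝒪`-linear combinations of those of `M`, so for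
`U, V ∈ GL_n(𝒪)` the least valuation of a `k × k` minor is an invariant of the double coset
`GL_n(𝒪) M GL_n(𝒪)`; for `diag(t^{a_1}, …, t^{a_n})` with `a` increasing it is `a_1 + ⋯ + a_k`.
These invariants determine `a`, so it remains to put every invertible `M` in such a form:
pivoting on an entry of least valuation, the Schur complement step only uses elimination matrices
with entries in `𝒪`, and the exponents found this way can be sorted afterwards.
-/

open Matrix

namespace AddValuation

section Ring

variable {R Γ₀ : Type*} [Ring R] [LinearOrderedAddCommMonoidWithTop Γ₀] (w : AddValuation R Γ₀)

def integer : Subring R where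
  carrier := {x | 0 ≤ w x}
  mul_mem' {x y} hx hy := by
    simp only [Set.mem_ofPred_eq, map_mul] at *
    exact add_nonneg hx hy
  one_mem' := by simp [map_one]
  add_mem' hx hy := w.map_le_add hx hy
  zero_mem' := by simp [map_zero]
  neg_mem' hx := by simpa [map_neg] using hx

theorem mem_integer {x : R} : x ∈ w.integer ↔ 0 ≤ w x := Iff.rfl

end Ring

theorem map_prod {R Γ₀ : Type*} [CommRing R] [LinearOrderedAddCommMonoidWithTop Γ₀]
    (w : AddValuation R Γ₀) {ι : Type*} (s : Finset ι) (f : ι → R) :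
    w (∏ i ∈ s, f i) = ∑ i ∈ s, w (f i) := by
  classical
  induction s using Finset.induction_on with
  | empty => simp [map_one]
  | insert i s hi ih => rw [Finset.prod_insert hi, Finset.sum_insert hi, map_mul, ih]

section Field

variable {K Γ₀ : Type*} [Field K] [LinearOrderedAddCommGroupWithTop Γ₀] (w : AddValuation K Γ₀)

theorem div_mem_integer {x p : K} (hp : p ≠ 0) (h : w p ≤ w x) : x / p ∈ w.integer := by
  have hp' : w p ≠ ⊤ := (w.ne_top_iff).2 hp
  rw [mem_integer, map_div, ← LinearOrderedAddCommGroupWithTop.sub_self_eq_zero_iff_ne_top.2 hp']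
  exact (LinearOrderedAddCommGroupWithTop.sub_le_sub_iff_left_of_ne_top hp').2 h

theorem isUnit_of_map_eq_zero {x : K} (hx : w x = 0) :
    IsUnit (⟨x, (w.mem_integer).2 hx.ge⟩ : w.integer) := by
  have hx0 : x ≠ 0 := fun h => by simp [h, map_zero] at hx
  exact IsUnit.of_mul_eq_one (⟨x⁻¹, (w.mem_integer).2 (by rw [map_inv, hx, neg_zero])⟩ : w.integer)
    (Subtype.ext (mul_inv_cancel₀ hx0))

end Field

theorem map_zpow_eq {K : Type*} [Field K] (w : AddValuation K (WithTop ℤ)) {t : K}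
    (ht : w t = 1) (m : ℤ) : w (t ^ m) = m := by
  rcases Int.eq_nat_or_neg m with ⟨m, rfl | rfl⟩ <;> simp [w.map_pow, w.map_inv, ht]

noncomputable def ofNeZero {K : Type*} [Field K] (v : K → ℤ)
    (hv_mul : ∀ x y : K, x ≠ 0 → y ≠ 0 → v (x * y) = v x + v y)
    (hv_add : ∀ x y : K, x ≠ 0 → y ≠ 0 → x + y ≠ 0 → min (v x) (v y) ≤ v (x + y)) :
    AddValuation K (WithTop ℤ) := by
  classical
  refine AddValuation.of (fun x => if x = 0 then ⊤ else (v x : WithTop ℤ)) (by simp) ?_ ?_ ?_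
  · have h1 := hv_mul 1 1 one_ne_zero one_ne_zero
    rw [mul_one, left_eq_add] at h1
    simp [h1]
  · intro x y
    by_cases hx : x = 0
    · simp [hx]
    by_cases hy : y = 0
    · simp [hy]
    by_cases hxy : x + y = 0
    · simp [hxy]
    simp only [hx, hy, hxy, if_false, ← WithTop.coe_min, WithTop.coe_le_coe]
    exact hv_add x y hx hy hxy
  · intro x y
    by_cases hx : x = 0
    · simp [hx]
    by_cases hy : y = 0
    · simp [hy]
    simp [hx, hy, hv_mul x y hx hy]

theorem ofNeZero_apply {K : Type*} [Field K] {v : K → ℤ} {hv_mul hv_add} {x : K} (hx : x ≠ 0) :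
    ofNeZero v hv_mul hv_add x = v x := by
  simp [ofNeZero, hx]

end AddValuation

namespace Fin

theorem val_le_of_strictMono {k n : ℕ} {f : Fin k → Fin n} (hf : StrictMono f) (i : Fin k) :
    (i : ℕ) ≤ f i := by
  have := Finset.card_le_card_of_injOn f (s := Finset.Iic i) (t := Finset.Iic (f i))
    (fun j hj => by simpa using hf.monotone (by simpa using hj)) hf.injective.injOn
  simpa using this

theorem sum_castLE_le_sum_of_injective {M : Type*} [AddCommMonoid M] [PartialOrder M]
    [IsOrderedAddMonoid M] {n k : ℕ} {a : Fin n → M} (ha : Monotone a) (hk : k ≤ n)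
    {c : Fin k → Fin n} (hc : Function.Injective c) :
    ∑ i : Fin k, a (castLE hk i) ≤ ∑ i, a (c i) := by
  have hmono : StrictMono (c ∘ Tuple.sort c) :=
    (Tuple.monotone_sort c).strictMono_of_injective (hc.comp (Tuple.sort c).injective)
  rw [← Equiv.sum_comp (Tuple.sort c) fun i => a (c i)]
  exact Finset.sum_le_sum fun i _ => ha (le_def.2 (val_le_of_strictMono hmono i))

theorem eq_of_sum_castLE_eq {M : Type*} [AddCancelCommMonoid M] {n : ℕ} {a b : Fin n → M}
    (h : ∀ k (hk : k ≤ n), ∑ i : Fin k, a (castLE hk i) = ∑ i : Fin k, b (castLE hk i)) :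
    a = b := by
  funext i
  have hi := h (i + 1) i.2
  have hlast : castLE (n := (i : ℕ) + 1) i.2 (last i) = i := Fin.ext rfl
  simp only [sum_univ_castSucc, castLE_castSucc, h i i.2.le, hlast] at hi
  exact add_left_cancel hi

end Fin

namespace Matrix

section Determinant

variable {R : Type*} [CommRing R]

theorem det_mem_of_forall_mem {n : Type*} [Fintype n] [DecidableEq n] {O : Subring R}
    {A : Matrix n n R} (hA : ∀ i j, A i j ∈ O) : A.det ∈ O := by
  rw [det_apply]
  exact sum_mem fun σ _ => Subring.zsmul_mem _ (prod_mem fun i _ => hA _ _) _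

/-- Cauchy–Binet, with the sum running over all (not only strictly increasing) row choices. -/
theorem det_mul_eq_sum {ι n : Type*} [Fintype ι] [DecidableEq ι] [Fintype n]
    (A : Matrix ι n R) (B : Matrix n ι R) :
    (A * B).det = ∑ f : ι → n, (∏ i, A i (f i)) * (B.submatrix f id).det := by
  have hAB : A * B = of fun i => ∑ j, A i j • B j := by
    ext i k; simp [mul_apply, Finset.sum_apply]
  rw [hAB]
  exact ((detRowAlternating : (ι → R) [⋀^ι]→ₗ[R] R).map_sum fun i j => A i j • B j).trans
    (Finset.sum_congr rfl fun f _ =>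
      (detRowAlternating : (ι → R) [⋀^ι]→ₗ[R] R).map_smul_univ (fun i => A i (f i)) _)

theorem injective_of_det_submatrix_ne_zero {m n ι : Type*} [Fintype ι] [DecidableEq ι]
    {M : Matrix m n R} {r : ι → m} {c : ι → n} (h : (M.submatrix r c).det ≠ 0) :
    Function.Injective r ∧ Function.Injective c := by
  refine ⟨fun i j hij => ?_, fun i j hij => ?_⟩ <;> by_contra hne <;> apply h
  · exact det_zero_of_row_eq hne (by ext k; simp [hij])
  · exact det_zero_of_column_eq hne fun k => by simp [hij]

theorem isUnit_det_submatrix_equiv {m n : Type*} [Fintype m] [DecidableEq m]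
    [Fintype n] [DecidableEq n] (A : Matrix n n R) (e₁ e₂ : m ≃ n) :
    IsUnit (A.submatrix e₁ e₂).det ↔ IsUnit A.det := by
  have h : A.submatrix e₁ e₂ = (A.submatrix (e₂.symm.trans e₁) id).submatrix e₂ e₂ := by
    ext i j; simp
  rw [h, det_submatrix_equiv_self, det_permute]
  rcases Int.units_eq_one_or (Equiv.Perm.sign (e₂.symm.trans e₁)) with hs | hs <;> simp [hs]

end Determinant

section minorValuation

variable {R Γ₀ : Type*} [CommRing R] [LinearOrderedAddCommMonoidWithTop Γ₀]
  (w : AddValuation R Γ₀) {m n : Type*} [Fintype m] [Fintype n]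

/-- Rows and columns may repeat: such minors vanish and do not affect the infimum. -/
noncomputable def minorValuation (M : Matrix m n R) (k : ℕ) : Γ₀ :=
  Finset.univ.inf fun rc : (Fin k → m) × (Fin k → n) => w (M.submatrix rc.1 rc.2).det

variable {w}

theorem le_minorValuation_iff {M : Matrix m n R} {k : ℕ} {β : Γ₀} :
    β ≤ minorValuation w M k ↔
      ∀ (r : Fin k → m) (c : Fin k → n), β ≤ w (M.submatrix r c).det := by
  simp [minorValuation, Prod.forall]

theorem minorValuation_le (M : Matrix m n R) {k : ℕ} (r : Fin k → m) (c : Fin k → n) :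
    minorValuation w M k ≤ w (M.submatrix r c).det :=
  Finset.inf_le (f := fun rc : (Fin k → m) × (Fin k → n) => w (M.submatrix rc.1 rc.2).det)
    (Finset.mem_univ (r, c))

theorem minorValuation_transpose (M : Matrix m n R) (k : ℕ) :
    minorValuation w Mᵀ k = minorValuation w M k := by
  refine le_antisymm (le_minorValuation_iff.2 fun r c => ?_)
    (le_minorValuation_iff.2 fun r c => ?_) <;>
  · rw [← det_transpose]; exact minorValuation_le _ c r

theorem minorValuation_le_mul_left {l : Type*} [Fintype l] (M : Matrix m n R)
    {A : Matrix l m R} (hA : ∀ i j, A i j ∈ w.integer) (k : ℕ) :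
    minorValuation w M k ≤ minorValuation w (A * M) k := by
  refine le_minorValuation_iff.2 fun r c => ?_
  rw [submatrix_mul _ _ _ id _ Function.bijective_id, det_mul_eq_sum]
  refine w.map_le_sum fun f _ => ?_
  rw [w.map_mul, submatrix_submatrix]
  exact le_add_of_nonneg_of_le (prod_mem fun i _ => hA _ _) (minorValuation_le M f c)

theorem minorValuation_le_mul_right {l : Type*} [Fintype l] (M : Matrix m n R)
    {B : Matrix n l R} (hB : ∀ i j, B i j ∈ w.integer) (k : ℕ) :
    minorValuation w M k ≤ minorValuation w (M * B) k := by
  rw [← minorValuation_transpose, ← minorValuation_transpose (M * B), transpose_mul]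
  exact minorValuation_le_mul_left _ (fun i j => hB j i) k

end minorValuation

section Equivalence

variable {K : Type*} [CommRing K] {O : Subring K} {n : Type*} [Fintype n]

theorem map_val_mul (A B : Matrix n n O) :
    (A * B).map (fun x => (x : K)) = A.map (fun x => (x : K)) * B.map (fun x => (x : K)) :=
  Matrix.map_mul (f := O.subtype)

variable (O) [DecidableEq n]

def EquivalentOver (M N : Matrix n n K) : Prop :=
  ∃ U V : Matrix n n O, IsUnit U.det ∧ IsUnit V.det ∧
    M = U.map (fun x => (x : K)) * N * V.map (fun x => (x : K))

variable {O}

namespace EquivalentOver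

theorem refl (M : Matrix n n K) : EquivalentOver O M M :=
  ⟨1, 1, by simp, by simp, by simp⟩

theorem symm {M N : Matrix n n K} (h : EquivalentOver O M N) : EquivalentOver O N M := by
  obtain ⟨U, V, hU, hV, rfl⟩ := h
  refine ⟨U⁻¹, V⁻¹, isUnit_nonsing_inv_det U hU, isUnit_nonsing_inv_det V hV, ?_⟩
  simp only [← Matrix.mul_assoc, ← map_val_mul, nonsing_inv_mul U hU]
  simp [Matrix.mul_assoc, ← map_val_mul, mul_nonsing_inv V hV]

theorem trans {M N P : Matrix n n K} (h₁ : EquivalentOver O M N) (h₂ : EquivalentOver O N P) :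
    EquivalentOver O M P := by
  obtain ⟨U₁, V₁, hU₁, hV₁, rfl⟩ := h₁
  obtain ⟨U₂, V₂, hU₂, hV₂, rfl⟩ := h₂
  refine ⟨U₁ * U₂, V₂ * V₁, by simpa using hU₁.mul hU₂, by simpa using hV₂.mul hV₁, ?_⟩
  simp only [map_val_mul, Matrix.mul_assoc]

theorem of_submatrix {p : Type*} [Fintype p] [DecidableEq p] {M : Matrix n n K}
    {d : p → K} (e₁ e₂ : p ≃ n) (e : n ≃ p)
    (h : EquivalentOver O (M.submatrix e₁ e₂) (diagonal d)) :
    EquivalentOver O M (diagonal (d ∘ e)) := by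
  obtain ⟨U, V, hU, hV, hM⟩ := h
  refine ⟨U.submatrix e₁.symm e, V.submatrix e e₂.symm, (isUnit_det_submatrix_equiv _ _ _).2 hU,
    (isUnit_det_submatrix_equiv _ _ _).2 hV, ?_⟩
  have : M = (M.submatrix e₁ e₂).submatrix e₁.symm e₂.symm := by ext; simp
  rw [this, hM, ← submatrix_mul_equiv _ _ _ e, ← submatrix_mul_equiv _ _ _ e,
    submatrix_diagonal_equiv]
  rfl

theorem fromBlocks_zero {m : Type*} [Fintype m] [DecidableEq m] {M₁ N₁ : Matrix m m K}
    {M₂ N₂ : Matrix n n K} (h₁ : EquivalentOver O M₁ N₁) (h₂ : EquivalentOver O M₂ N₂) :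
    EquivalentOver O (fromBlocks M₁ 0 0 M₂) (fromBlocks N₁ 0 0 N₂) := by
  obtain ⟨U₁, V₁, hU₁, hV₁, rfl⟩ := h₁
  obtain ⟨U₂, V₂, hU₂, hV₂, rfl⟩ := h₂
  refine ⟨fromBlocks U₁ 0 0 U₂, fromBlocks V₁ 0 0 V₂, ?_, ?_, ?_⟩
  · simpa [det_fromBlocks_zero₂₁] using hU₁.mul hU₂
  · simpa [det_fromBlocks_zero₂₁] using hV₁.mul hV₂
  · simp [fromBlocks_map, fromBlocks_multiply]

theorem minorValuation_le {Γ₀ : Type*} [LinearOrderedAddCommMonoidWithTop Γ₀]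
    {w : AddValuation K Γ₀} {M N : Matrix n n K} (h : EquivalentOver w.integer M N) (k : ℕ) :
    minorValuation w N k ≤ minorValuation w M k := by
  obtain ⟨U, V, -, -, rfl⟩ := h
  exact (minorValuation_le_mul_left N (fun i j => (U i j).2) k).trans
    (minorValuation_le_mul_right _ (fun i j => (V i j).2) k)

theorem minorValuation_eq {Γ₀ : Type*} [LinearOrderedAddCommMonoidWithTop Γ₀]
    {w : AddValuation K Γ₀} {M N : Matrix n n K} (h : EquivalentOver w.integer M N) (k : ℕ) :
    minorValuation w M k = minorValuation w N k :=
  le_antisymm (h.symm.minorValuation_le k) (h.minorValuation_le k)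

end EquivalentOver

theorem equivalentOver_diagonal_unit_mul {u : n → O} (hu : ∀ i, IsUnit (u i)) (d : n → K) :
    EquivalentOver O (diagonal fun i => u i * d i) (diagonal d) :=
  ⟨diagonal u, 1, by simpa [det_diagonal] using hu, by simp, by simp [diagonal_map]⟩

theorem equivalentOver_fromBlocks_of_invertible₂₂ {m : Type*} [Fintype m] [DecidableEq m]
    (A : Matrix m m K) (B : Matrix m n K) (C : Matrix n m K) (D : Matrix n n K) [Invertible D]
    (hB : ∀ i j, (B * ⅟D) i j ∈ O) (hC : ∀ i j, (⅟D * C) i j ∈ O) :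
    EquivalentOver O (fromBlocks A B C D) (fromBlocks (A - B * ⅟D * C) 0 0 D) := by
  refine ⟨fromBlocks 1 (of fun i j => ⟨_, hB i j⟩) 0 1,
    fromBlocks 1 0 (of fun i j => ⟨_, hC i j⟩) 1, by simp, by simp, ?_⟩
  rw [fromBlocks_eq_of_invertible₂₂]
  simp [fromBlocks_map]
  rfl

end Equivalence

section Diagonalization

variable {K Γ₀ : Type*} [Field K] [LinearOrderedAddCommGroupWithTop Γ₀] (w : AddValuation K Γ₀)

theorem exists_equivalentOver_diagonal_of_pivot {α : Type*} [Fintype α] [DecidableEq α]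
    (ih : ∀ M : Matrix α α K, ∃ d, EquivalentOver w.integer M (diagonal d))
    (M : Matrix (α ⊕ Unit) (α ⊕ Unit) K) (hp : M (.inr ()) (.inr ()) ≠ 0)
    (hmin : ∀ i j, w (M (.inr ()) (.inr ())) ≤ w (M i j)) :
    ∃ d, EquivalentOver w.integer M (diagonal d) := by
  set p := M (.inr ()) (.inr ())
  let D : Matrix Unit Unit K := diagonal fun _ => p
  let D' : Matrix Unit Unit K := diagonal fun _ => p⁻¹
  let : Invertible D := ⟨D', by simp [D, D', hp], by simp [D, D', hp]⟩
  have hD : M.toBlocks₂₂ = D := by ext ⟨⟩ ⟨⟩; rfl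
  obtain ⟨d, hd⟩ := ih (M.toBlocks₁₁ - M.toBlocks₁₂ * ⅟D * M.toBlocks₂₁)
  refine ⟨Sum.elim d fun _ => p, ?_⟩
  rw [← fromBlocks_toBlocks M, hD, ← fromBlocks_diagonal]
  refine (equivalentOver_fromBlocks_of_invertible₂₂ _ _ _ _ (fun i j => ?_) (fun i j => ?_)).trans
    (hd.fromBlocks_zero (.refl _))
  · change (M.toBlocks₁₂ * D') i j ∈ _
    rw [mul_diagonal, ← div_eq_mul_inv]
    exact w.div_mem_integer hp (hmin _ _)
  · change (D' * M.toBlocks₂₁) i j ∈ _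
    rw [diagonal_mul, inv_mul_eq_div]
    exact w.div_mem_integer hp (hmin _ _)

theorem exists_equivalentOver_diagonal {n : Type*} [Fintype n] [DecidableEq n]
    (M : Matrix n n K) : ∃ d, EquivalentOver w.integer M (diagonal d) := by
  refine Fintype.induction_empty_option
    (P := fun α _ =>
      ∀ [DecidableEq α] (M : Matrix α α K), ∃ d, EquivalentOver w.integer M (diagonal d))
    (fun α β _ e ih _ M => ?_) (fun M => ⟨0, Subsingleton.elim (diagonal 0) M ▸ .refl _⟩)
    (fun α _ ih _ M => ?_) n M
  · classical
    let := Fintype.ofEquiv β e.symm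
    obtain ⟨d, hd⟩ := ih (M.submatrix e e)
    exact ⟨_, hd.of_submatrix e e e.symm⟩
  · classical
    by_cases hM : M = 0
    · exact ⟨0, by simpa [hM] using EquivalentOver.refl (0 : Matrix (Option α) (Option α) K)⟩
    obtain ⟨⟨i₀, j₀⟩, hmin⟩ := Finite.exists_min fun ij : Option α × Option α => w (M ij.1 ij.2)
    have hp : M i₀ j₀ ≠ 0 := fun h => hM <| by
      ext i j
      simpa [h, map_zero, w.top_iff] using hmin (i, j)
    obtain ⟨d, hd⟩ := exists_equivalentOver_diagonal_of_pivot w ih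
      (M.submatrix ((Equiv.optionEquivSumPUnit.{0} α).symm.trans (Equiv.swap none i₀))
        ((Equiv.optionEquivSumPUnit.{0} α).symm.trans (Equiv.swap none j₀)))
      (by simpa [Equiv.optionEquivSumPUnit_symm_inr] using hp)
      (fun i j => by simpa [Equiv.optionEquivSumPUnit_symm_inr] using hmin (_, _))
    exact ⟨_, hd.of_submatrix _ _ (Equiv.optionEquivSumPUnit.{0} α)⟩

end Diagonalization

section IntValued

variable {K : Type*} [Field K] {w : AddValuation K (WithTop ℤ)} {t : K}

theorem exists_monotone_equivalentOver_diagonal_zpow (ht : w t = 1) {n : ℕ}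
    (M : Matrix (Fin n) (Fin n) K) (hM : M.det ≠ 0) :
    ∃ b : Fin n → ℤ, Monotone b ∧ EquivalentOver w.integer M (diagonal fun i => t ^ b i) := by
  obtain ⟨d, hd⟩ := exists_equivalentOver_diagonal w M
  have hd0 : ∀ i, d i ≠ 0 := by
    obtain ⟨U, V, -, -, rfl⟩ := hd
    rw [det_mul, det_mul, det_diagonal] at hM
    exact fun i => Finset.prod_ne_zero_iff.1 (right_ne_zero_of_mul (left_ne_zero_of_mul hM)) i
      (Finset.mem_univ i)
  choose b hb using fun i => WithTop.ne_top_iff_exists.1 ((w.ne_top_iff).2 (hd0 i))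
  have ht0 : t ≠ 0 := (w.ne_top_iff).1 (by simp [ht])
  have hu : ∀ i, w (d i * t ^ (-b i)) = 0 := fun i => by
    rw [w.map_mul, ← hb, w.map_zpow_eq ht, ← WithTop.coe_add, add_neg_cancel]
    rfl
  have hdiag : EquivalentOver w.integer (diagonal d) (diagonal fun i => t ^ b i) := by
    have hd_eq : d = fun i => d i * t ^ (-b i) * t ^ b i := funext fun i => by
      rw [_root_.zpow_neg, mul_assoc, inv_mul_cancel₀ (zpow_ne_zero _ ht0), mul_one]
    conv_lhs => rw [hd_eq]
    exact equivalentOver_diagonal_unit_mul (fun i => w.isUnit_of_map_eq_zero (hu i)) _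
  have hsort := EquivalentOver.of_submatrix (O := w.integer) (M := diagonal fun i => t ^ b i)
    (Equiv.refl _) (Equiv.refl _) (Tuple.sort b) (.refl _)
  exact ⟨b ∘ Tuple.sort b, Tuple.monotone_sort b, hd.trans (hdiag.trans hsort)⟩

theorem minorValuation_diagonal_zpow (ht : w t = 1) {n : ℕ} {a : Fin n → ℤ} (ha : Monotone a)
    {k : ℕ} (hk : k ≤ n) :
    minorValuation w (diagonal fun i => t ^ a i) k = ↑(∑ i : Fin k, a (Fin.castLE hk i)) := by
  have hval : ∀ c : Fin k → Fin n, w (∏ i, t ^ a (c i)) = ↑(∑ i, a (c i)) := fun c => by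
    simp [w.map_prod, w.map_zpow_eq ht, WithTop.coe_sum]
  refine le_antisymm ?_ (le_minorValuation_iff.2 fun r c => ?_)
  · calc _ ≤ _ := minorValuation_le _ (Fin.castLE hk) (Fin.castLE hk)
      _ = _ := by
        rw [submatrix_diagonal _ _ (Fin.castLE_injective hk), det_diagonal]
        exact hval _
  · by_cases h0 : ((diagonal fun i => t ^ a i).submatrix r c).det = 0
    · simp [h0]
    have hsplit : (diagonal fun i => t ^ a i).submatrix r c =
        (1 : Matrix (Fin n) (Fin n) K).submatrix r c * diagonal fun i => t ^ a (c i) := by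
      ext i j
      by_cases hij : r i = c j <;> simp [one_apply, hij]
    rw [hsplit, det_mul, det_diagonal, w.map_mul, hval]
    refine le_add_of_nonneg_of_le ((w.mem_integer).1 (det_mem_of_forall_mem fun i j => ?_))
      (WithTop.coe_le_coe.2 (Fin.sum_castLE_le_sum_of_injective ha hk
        (injective_of_det_submatrix_ne_zero h0).2))
    rw [submatrix_apply, one_apply]
    split_ifs
    exacts [one_mem _, zero_mem _]

theorem EquivalentOver.minorValuation_eq_sum (ht : w t = 1) {n : ℕ}
    {M : Matrix (Fin n) (Fin n) K} {a : Fin n → ℤ} (ha : Monotone a)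
    (h : EquivalentOver w.integer M (diagonal fun i => t ^ a i)) {k : ℕ} (hk : k ≤ n) :
    minorValuation w M k = ↑(∑ i : Fin k, a (Fin.castLE hk i)) :=
  (h.minorValuation_eq k).trans (minorValuation_diagonal_zpow ht ha hk)

theorem equivalentOver_diagonal_zpow_iff (ht : w t = 1) {n : ℕ} {M : Matrix (Fin n) (Fin n) K}
    (hM : M.det ≠ 0) {a : Fin n → ℤ} (ha : Monotone a) :
    EquivalentOver w.integer M (diagonal fun i => t ^ a i) ↔
      ∀ k : ℕ, 1 ≤ k → ∀ hk : k ≤ n,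
        minorValuation w M k = ↑(∑ i : Fin k, a (Fin.castLE hk i)) := by
  refine ⟨fun h k _ hk => h.minorValuation_eq_sum ht ha hk, fun H => ?_⟩
  obtain ⟨b, hb, hMb⟩ := exists_monotone_equivalentOver_diagonal_zpow ht M hM
  obtain rfl : a = b := Fin.eq_of_sum_castLE_eq fun k hk => by
    rcases k.eq_zero_or_pos with rfl | hk1
    · simp
    · exact WithTop.coe_injective ((H k hk1 hk).symm.trans (hMb.minorValuation_eq_sum ht hb hk))
  exact hMb

theorem isLeast_iff_minorValuation_eq {v : K → ℤ} (hw : ∀ x, x ≠ 0 → w x = v x) {m n : Type*}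
    [Fintype m] [Fintype n] (M : Matrix m n K) (k : ℕ) (s : ℤ) :
    IsLeast {x : ℤ | ∃ r c : Fin k → _, Function.Injective r ∧ Function.Injective c ∧
        (M.submatrix r c).det ≠ 0 ∧ v (M.submatrix r c).det = x} s ↔
      minorValuation w M k = s := by
  constructor
  · rintro ⟨⟨r, c, -, -, h0, hs⟩, hle⟩
    refine le_antisymm (hs ▸ hw _ h0 ▸ minorValuation_le M r c)
      (le_minorValuation_iff.2 fun r' c' => ?_)
    by_cases h0' : (M.submatrix r' c').det = 0
    · simp [h0']
    obtain ⟨hr', hc'⟩ := injective_of_det_submatrix_ne_zero h0'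
    rw [hw _ h0']
    exact WithTop.coe_le_coe.2 (hle ⟨r', c', hr', hc', h0', rfl⟩)
  · intro h
    have hne : (Finset.univ : Finset ((Fin k → m) × (Fin k → n))).Nonempty := by
      by_contra he
      simp [minorValuation, Finset.not_nonempty_iff_eq_empty.1 he] at h
    obtain ⟨⟨r, c⟩, -, hrc⟩ := Finset.exists_mem_eq_inf _ hne
      fun rc : (Fin k → m) × (Fin k → n) => w (M.submatrix rc.1 rc.2).det
    have hs : w (M.submatrix r c).det = s := hrc ▸ h
    have h0 : (M.submatrix r c).det ≠ 0 := fun h0 => by simp [h0] at hs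
    obtain ⟨hr, hc⟩ := injective_of_det_submatrix_ne_zero h0
    refine ⟨⟨r, c, hr, hc, h0, WithTop.coe_injective (hw _ h0 ▸ hs)⟩, ?_⟩
    rintro x ⟨r', c', -, -, h0', rfl⟩
    exact WithTop.coe_le_coe.1 (h ▸ hw _ h0' ▸ minorValuation_le M r' c')

end IntValued

end Matrix

theorem stmt_0_general {L : Type*} [Field L] (v : L → ℤ) (t : L)
    (hv_mul : ∀ x y : L, x ≠ 0 → y ≠ 0 → v (x * y) = v x + v y)
    (hv_add : ∀ x y : L, x ≠ 0 → y ≠ 0 → x + y ≠ 0 → min (v x) (v y) ≤ v (x + y))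
    (ht0 : t ≠ 0) (ht1 : v t = 1)
    (O : Subring L) (hO : ∀ x : L, x ∈ O ↔ x = 0 ∨ 0 ≤ v x)
    (n : ℕ)
    (g : Matrix (Fin n) (Fin n) L) (hg : IsUnit g.det)
    (a : Fin n → ℤ) (ha : Monotone a) :
    (∃ U V : Matrix (Fin n) (Fin n) O, IsUnit U.det ∧ IsUnit V.det ∧
        g = U.map (fun x => (x : L)) * Matrix.diagonal (fun i => t ^ (a i)) *
              V.map (fun x => (x : L)))
      ↔ ∀ k : ℕ, 1 ≤ k → ∀ hk : k ≤ n,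
          IsLeast {w : ℤ | ∃ r c : Fin k → Fin n, Function.Injective r ∧ Function.Injective c ∧
              (g.submatrix r c).det ≠ 0 ∧ v ((g.submatrix r c).det) = w}
            (∑ i : Fin k, a (Fin.castLE hk i)) := by
  obtain ⟨w, hw⟩ : ∃ w : AddValuation L (WithTop ℤ), ∀ x, x ≠ 0 → w x = v x :=
    ⟨.ofNeZero v hv_mul hv_add, fun _ hx => AddValuation.ofNeZero_apply hx⟩
  obtain rfl : O = w.integer := Subring.ext fun x => (hO x).trans <| by
    rcases eq_or_ne x 0 with rfl | hx
    · simp [w.mem_integer]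
    · simp [hx, w.mem_integer, hw x hx]
  simp only [isLeast_iff_minorValuation_eq hw]
  exact equivalentOver_diagonal_zpow_iff (by rw [hw t ht0, ht1]; rfl) hg.ne_zero ha

/-- Smith normal form criterion for the Cartan decomposition: `g` lies in
`GL_n(𝒪_L) ⬝ diag(t^{a_1},…,t^{a_n}) ⬝ GL_n(𝒪_L)` (with `a_1 ≤ ⋯ ≤ a_n`) iff for each
`k = 1,…,n` the minimal valuation of a nonzero `k×k` minor of `g` is `a_1 + ⋯ + a_k`. -/
theorem stmt_0 {L : Type*} [Field L] (v : L → ℤ) (t : L)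
    (hv_mul : ∀ x y : L, x ≠ 0 → y ≠ 0 → v (x * y) = v x + v y)
    (hv_add : ∀ x y : L, x ≠ 0 → y ≠ 0 → x + y ≠ 0 → min (v x) (v y) ≤ v (x + y))
    (hv_surj : ∀ n : ℤ, ∃ x : L, x ≠ 0 ∧ v x = n)
    (ht0 : t ≠ 0) (ht1 : v t = 1)
    (O : Subring L) (hO : ∀ x : L, x ∈ O ↔ x = 0 ∨ 0 ≤ v x)
    (n : ℕ) (hn : 1 ≤ n)
    (g : Matrix (Fin n) (Fin n) L) (hg : IsUnit g.det)
    (a : Fin n → ℤ) (ha : Monotone a) :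
    (∃ U V : Matrix (Fin n) (Fin n) O, IsUnit U.det ∧ IsUnit V.det ∧
        g = U.map (fun x => (x : L)) * Matrix.diagonal (fun i => t ^ (a i)) *
              V.map (fun x => (x : L)))
      ↔ ∀ k : ℕ, 1 ≤ k → ∀ hk : k ≤ n,
          IsLeast {w : ℤ | ∃ r c : Fin k → Fin n, Function.Injective r ∧ Function.Injective c ∧
              (g.submatrix r c).det ≠ 0 ∧ v ((g.submatrix r c).det) = w}
            (∑ i : Fin k, a (Fin.castLE hk i)) :=
  stmt_0_general v t hv_mul hv_add ht0 ht1 O hO n g hg a ha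
end

section
/- Let k_1, k_2, k_3 ≥ 1 and let E_1, E'_1 ∈ M_{k_1×k_2}(L), E_2, E'_2 ∈ M_{k_1×k_3}(L), E_3, E'_3 ∈ M_{k_2×k_3}(L). Let N (respectively N') be the (k_1+k_2+k_3)×(k_1+k_2+k_3) block matrix [[0, E_1, E_2],[0, 0, E_3],[0, 0, 0]] (respectively with E'_i in place of E_i), and let A ∈ GL_{k_1}(L), B ∈ GL_{k_2}(L), C ∈ GL_{k_3}(L), U = diag(A, B, C). Set g = U(I+N), g' = U(I+N'). Then g · GL_{k_1+k_2+k_3}(𝒪_L) = g' · GL_{k_1+k_2+k_3}(𝒪_L) if and only if all three matrices E'_1 − E_1, E'_3 − E_3, and E'_2 − E_2 − E_1 E'_3 + E_1 E_3 have all entries in 𝒪_L. -/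
/-!
With `M = 1 + N(E₁' - E₁, E₂' - E₂ - E₁E₃' + E₁E₃, E₃' - E₃)`, the multiplication rule of
block unipotent matrices gives `(1 + N) M = 1 + N'`, so `g' = g M`. As `g` is invertible,
`g k = g'` forces `k = M`; conversely `det M = 1`, so `M` lies in `GL(𝒪)` as soon as its
entries lie in `𝒪`, and those entries are `0`, `1` and the entries of the three blocks.
-/

open Matrix

namespace Matrix

section BlockStrictUpper

variable {l m n R : Type*} [DecidableEq l] [DecidableEq m] [DecidableEq n] [CommRing R]

def blockStrictUpper (E₁ : Matrix l m R) (E₂ : Matrix l n R) (E₃ : Matrix m n R) :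
    Matrix (l ⊕ m ⊕ n) (l ⊕ m ⊕ n) R :=
  fromBlocks 0 (fromCols E₁ E₂) 0 (fromBlocks 0 E₃ 0 0)

theorem one_add_blockStrictUpper_mem_iff (O : Subring R) (E₁ : Matrix l m R)
    (E₂ : Matrix l n R) (E₃ : Matrix m n R) :
    (∀ i j, (1 + blockStrictUpper E₁ E₂ E₃) i j ∈ O) ↔
      (∀ i j, E₁ i j ∈ O) ∧ (∀ i j, E₃ i j ∈ O) ∧ (∀ i j, E₂ i j ∈ O) := by
  simp only [blockStrictUpper, ← fromBlocks_one, Sum.forall, fromBlocks_apply₁₁,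
    fromBlocks_apply₁₂, fromBlocks_apply₂₁, fromBlocks_apply₂₂, fromCols_apply_inl,
    fromCols_apply_inr, add_apply, one_apply, zero_apply]
  simp [apply_ite (· ∈ O), O.one_mem, O.zero_mem, forall_and]
  tauto

variable [Fintype l] [Fintype m] [Fintype n]

theorem one_add_blockStrictUpper_mul (E₁ F₁ : Matrix l m R) (E₂ F₂ : Matrix l n R)
    (E₃ F₃ : Matrix m n R) :
    (1 + blockStrictUpper E₁ E₂ E₃) * (1 + blockStrictUpper F₁ F₂ F₃) =
      1 + blockStrictUpper (E₁ + F₁) (E₂ + F₂ + E₁ * F₃) (E₃ + F₃) := by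
  simp only [blockStrictUpper, ← fromBlocks_one, fromBlocks_add, fromBlocks_multiply]
  simp only [Matrix.mul_one, Matrix.one_mul, Matrix.mul_zero, Matrix.zero_mul, add_zero, zero_add,
    fromCols_mul_fromBlocks, fromBlocks_inj, true_and, and_true]
  refine ⟨?_, add_comm _ _⟩
  ext i (j | j) <;> simp <;> abel

theorem det_one_add_blockStrictUpper (E₁ : Matrix l m R) (E₂ : Matrix l n R)
    (E₃ : Matrix m n R) : (1 + blockStrictUpper E₁ E₂ E₃).det = 1 := by
  simp [blockStrictUpper, ← fromBlocks_one, fromBlocks_add, det_fromBlocks_zero₂₁]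

end BlockStrictUpper

theorem exists_isUnit_det_mul_map_eq_mul_iff {n R : Type*} [Fintype n] [DecidableEq n]
    [CommRing R] (O : Subring R) {g M : Matrix n n R} (hg : IsUnit g.det) (hM : M.det = 1) :
    (∃ k : Matrix n n O, IsUnit k.det ∧ g * k.map (fun x => (x : R)) = g * M) ↔
      ∀ i j, M i j ∈ O := by
  have hg' : IsUnit g := (isUnit_iff_isUnit_det g).mpr hg
  constructor
  · rintro ⟨k, -, hk⟩ i j
    rw [← hg'.mul_left_cancel hk]
    exact (k i j).2
  · intro hO
    let k : Matrix n n O := of fun i j => ⟨M i j, hO i j⟩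
    have hk : k.map (fun x => (x : R)) = M := rfl
    have hdet : k.det = 1 := Subtype.coe_injective <| by
      simpa [hk, hM] using (RingHom.map_det O.subtype k)
    exact ⟨k, hdet ▸ isUnit_one, by rw [hk]⟩

end Matrix

theorem stmt_3_general {L : Type*} [Field L]
    (O : Subring L)
    (k₁ k₂ k₃ : ℕ)
    (E₁ E₁' : Matrix (Fin k₁) (Fin k₂) L)
    (E₂ E₂' : Matrix (Fin k₁) (Fin k₃) L)
    (E₃ E₃' : Matrix (Fin k₂) (Fin k₃) L)
    (A : Matrix (Fin k₁) (Fin k₁) L) (hA : IsUnit A.det)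
    (B : Matrix (Fin k₂) (Fin k₂) L) (hB : IsUnit B.det)
    (C : Matrix (Fin k₃) (Fin k₃) L) (hC : IsUnit C.det)
    (U : Matrix (Fin k₁ ⊕ (Fin k₂ ⊕ Fin k₃)) (Fin k₁ ⊕ (Fin k₂ ⊕ Fin k₃)) L)
    (hU : U = Matrix.fromBlocks A 0 0 (Matrix.fromBlocks B 0 0 C))
    (N N' : Matrix (Fin k₁ ⊕ (Fin k₂ ⊕ Fin k₃)) (Fin k₁ ⊕ (Fin k₂ ⊕ Fin k₃)) L)
    (hN : N = Matrix.fromBlocks 0 (Matrix.fromCols E₁ E₂) 0 (Matrix.fromBlocks 0 E₃ 0 0))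
    (hN' : N' = Matrix.fromBlocks 0 (Matrix.fromCols E₁' E₂') 0
        (Matrix.fromBlocks 0 E₃' 0 0)) :
    (∃ k : Matrix (Fin k₁ ⊕ (Fin k₂ ⊕ Fin k₃)) (Fin k₁ ⊕ (Fin k₂ ⊕ Fin k₃)) O,
        IsUnit k.det ∧ (U * (1 + N)) * k.map (fun x => (x : L)) = U * (1 + N'))
      ↔ ((∀ i j, (E₁' - E₁) i j ∈ O) ∧ (∀ i j, (E₃' - E₃) i j ∈ O) ∧
          (∀ i j, (E₂' - E₂ - E₁ * E₃' + E₁ * E₃) i j ∈ O)) := by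
  replace hN : N = blockStrictUpper E₁ E₂ E₃ := hN
  replace hN' : N' = blockStrictUpper E₁' E₂' E₃' := hN'
  have hUdet : IsUnit U.det := by
    rw [hU, det_fromBlocks_zero₂₁, det_fromBlocks_zero₂₁]
    exact hA.mul (hB.mul hC)
  set M := 1 + blockStrictUpper (E₁' - E₁) (E₂' - E₂ - E₁ * E₃' + E₁ * E₃) (E₃' - E₃)
  have hfactor : 1 + N' = (1 + N) * M := by
    rw [hN, hN', one_add_blockStrictUpper_mul, Matrix.mul_sub]
    congr <;> abel
  have hgdet : IsUnit (U * (1 + N)).det := by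
    rwa [det_mul, hN, det_one_add_blockStrictUpper, mul_one]
  rw [hfactor, ← mul_assoc, exists_isUnit_det_mul_map_eq_mul_iff O hgdet
    (det_one_add_blockStrictUpper _ _ _), one_add_blockStrictUpper_mem_iff]

/-- Coset criterion for 3-block upper unipotent parametrizations:
`U(I+N)·K = U(I+N')·K` iff `E'_1 − E_1`, `E'_3 − E_3` and `E'_2 − E_2 − E_1E'_3 + E_1E_3`
all have entries in `𝒪_L`. -/
theorem stmt_3 {L : Type*} [Field L] (v : L → ℤ) (t : L)
    (hv_mul : ∀ x y : L, x ≠ 0 → y ≠ 0 → v (x * y) = v x + v y)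
    (hv_add : ∀ x y : L, x ≠ 0 → y ≠ 0 → x + y ≠ 0 → min (v x) (v y) ≤ v (x + y))
    (hv_surj : ∀ n : ℤ, ∃ x : L, x ≠ 0 ∧ v x = n)
    (ht0 : t ≠ 0) (ht1 : v t = 1)
    (O : Subring L) (hO : ∀ x : L, x ∈ O ↔ x = 0 ∨ 0 ≤ v x)
    (k₁ k₂ k₃ : ℕ) (hk₁ : 1 ≤ k₁) (hk₂ : 1 ≤ k₂) (hk₃ : 1 ≤ k₃)
    (E₁ E₁' : Matrix (Fin k₁) (Fin k₂) L)
    (E₂ E₂' : Matrix (Fin k₁) (Fin k₃) L)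
    (E₃ E₃' : Matrix (Fin k₂) (Fin k₃) L)
    (A : Matrix (Fin k₁) (Fin k₁) L) (hA : IsUnit A.det)
    (B : Matrix (Fin k₂) (Fin k₂) L) (hB : IsUnit B.det)
    (C : Matrix (Fin k₃) (Fin k₃) L) (hC : IsUnit C.det)
    (U : Matrix (Fin k₁ ⊕ (Fin k₂ ⊕ Fin k₃)) (Fin k₁ ⊕ (Fin k₂ ⊕ Fin k₃)) L)
    (hU : U = Matrix.fromBlocks A 0 0 (Matrix.fromBlocks B 0 0 C))
    (N N' : Matrix (Fin k₁ ⊕ (Fin k₂ ⊕ Fin k₃)) (Fin k₁ ⊕ (Fin k₂ ⊕ Fin k₃)) L)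
    (hN : N = Matrix.fromBlocks 0 (Matrix.fromCols E₁ E₂) 0 (Matrix.fromBlocks 0 E₃ 0 0))
    (hN' : N' = Matrix.fromBlocks 0 (Matrix.fromCols E₁' E₂') 0
        (Matrix.fromBlocks 0 E₃' 0 0)) :
    (∃ k : Matrix (Fin k₁ ⊕ (Fin k₂ ⊕ Fin k₃)) (Fin k₁ ⊕ (Fin k₂ ⊕ Fin k₃)) O,
        IsUnit k.det ∧ (U * (1 + N)) * k.map (fun x => (x : L)) = U * (1 + N'))
      ↔ ((∀ i j, (E₁' - E₁) i j ∈ O) ∧ (∀ i j, (E₃' - E₃) i j ∈ O) ∧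
          (∀ i j, (E₂' - E₂ - E₁ * E₃' + E₁ * E₃) i j ∈ O)) :=
  stmt_3_general O k₁ k₂ k₃ E₁ E₁' E₂ E₂' E₃ E₃' A hA B hB C hC U hU N N' hN hN'
end

section
/- Let N ≥ 1 and let c_0, c_1, …, c_{N−1} ∈ L, with indices taken modulo N. Suppose one of the following two hypotheses holds: (a) for every i, either σ(c_i) − c_{i+1} ∈ 𝒪_L or t·σ(c_i) − c_{i+1} ∈ 𝒪_L, and the second alternative holds for at least one i; or (b) for every i, either σ(c_i) − c_{i+1} ∈ 𝒪_L or σ(c_i) − t·c_{i+1} ∈ 𝒪_L, and the second alternative holds for at least one i. Then c_i ∈ 𝒪_L for all i. -/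
open Classical in
private noncomputable def gval {L : Type*} [Field L] (v : L → ℤ) (x : L) : ℤ :=
  if x = 0 then 0 else min (v x) 0

private lemma gval_le_zero {L : Type*} [Field L] (v : L → ℤ) (x : L) : gval v x ≤ 0 := by
  unfold gval; split <;> omega

private lemma gval_nonneg_iff {L : Type*} [Field L] (v : L → ℤ) (O : Subring L)
    (hO : ∀ x : L, x ∈ O ↔ x = 0 ∨ 0 ≤ v x) (x : L) : 0 ≤ gval v x ↔ x ∈ O := by
  unfold gval
  rw [hO]
  split <;> simp_all <;> omega

private lemma aux_chain (m : ℤ) (d : ℕ → ℤ)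
    (h0 : min (m + 1) 0 ≤ d 0)
    (hs : ∀ k, d k = d (k + 1) ∨ min (d k + 1) 0 ≤ d (k + 1)) :
    ∀ k, min (m + 1) 0 ≤ d k := by
  intro k
  induction k with
  | zero => exact h0
  | succ k ih => rcases hs k with h | h <;> omega

/-- Integrality on a cyclic chain: if the `c_i` (indices mod `N`) satisfy, at
every step, either `σ(c_i) − c_{i+1} ∈ 𝒪_L` or `t·σ(c_i) − c_{i+1} ∈ 𝒪_L` (with the second
alternative occurring at least once), or the analogous condition with `σ(c_i) − t·c_{i+1}`,
then all `c_i` lie in `𝒪_L`. -/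
theorem stmt_4 {L : Type*} [Field L] (v : L → ℤ) (t : L)
    (hv_mul : ∀ x y : L, x ≠ 0 → y ≠ 0 → v (x * y) = v x + v y)
    (hv_add : ∀ x y : L, x ≠ 0 → y ≠ 0 → x + y ≠ 0 → min (v x) (v y) ≤ v (x + y))
    (hv_surj : ∀ n : ℤ, ∃ x : L, x ≠ 0 ∧ v x = n)
    (ht0 : t ≠ 0) (ht1 : v t = 1)
    (O : Subring L) (hO : ∀ x : L, x ∈ O ↔ x = 0 ∨ 0 ≤ v x)
    (σ : L ≃+* L) (hσt : σ t = t) (hσv : ∀ x : L, x ≠ 0 → v (σ x) = v x)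
    (N : ℕ) (hN : 1 ≤ N) (c : ZMod N → L)
    (hyp :
      ((∀ i : ZMod N, σ (c i) - c (i + 1) ∈ O ∨ t * σ (c i) - c (i + 1) ∈ O) ∧
        (∃ i : ZMod N, t * σ (c i) - c (i + 1) ∈ O)) ∨
      ((∀ i : ZMod N, σ (c i) - c (i + 1) ∈ O ∨ σ (c i) - t * c (i + 1) ∈ O) ∧
        (∃ i : ZMod N, σ (c i) - t * c (i + 1) ∈ O))) :
    ∀ i : ZMod N, c i ∈ O := by
  classical
  haveI : NeZero N := ⟨by omega⟩
  -- basic valuation facts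
  have hv1 : v 1 = 0 := by
    have h := hv_mul 1 1 one_ne_zero one_ne_zero; rw [one_mul] at h; omega
  have hvneg1 : v (-1 : L) = 0 := by
    have h := hv_mul (-1) (-1) (by norm_num) (by norm_num)
    rw [neg_mul_neg, one_mul] at h; omega
  have hv_neg : ∀ x : L, x ≠ 0 → v (-x) = v x := by
    intro x hx
    have h := hv_mul (-1) x (by norm_num) hx
    rw [neg_one_mul] at h; omega
  -- gval and subtraction-in-O
  have gmem : ∀ x : L, x ∈ O → gval v x = 0 := by
    intro x hx
    have h1 := gval_le_zero v x
    have h2 := (gval_nonneg_iff v O hO x).mpr hx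
    omega
  have gle : ∀ x y : L, x - y ∈ O → gval v x ≤ gval v y := by
    intro x y h
    by_cases hxO : x ∈ O
    · have hyO : y ∈ O := by
        have := O.sub_mem hxO h
        simpa using this
      rw [gmem x hxO, gmem y hyO]
    · have hx0 : x ≠ 0 := fun h0 => hxO (h0 ▸ O.zero_mem)
      have hvx : v x < 0 := by
        rw [hO] at hxO; push_neg at hxO; exact hxO.2
      by_cases hxy : x = y
      · rw [hxy]
      · have hz0 : x - y ≠ 0 := sub_ne_zero.mpr hxy
        have hvz : 0 ≤ v (x - y) := ((hO _).mp h).resolve_left hz0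
        have hy0 : y ≠ 0 := by
          intro h0
          apply hxO
          rw [h0, sub_zero] at h
          exact h
        have hsum : x + -(x - y) = y := by ring
        have hne : x + -(x - y) ≠ 0 := by rw [hsum]; exact hy0
        have hmin := hv_add x (-(x - y)) hx0 (neg_ne_zero.mpr hz0) hne
        rw [hsum, hv_neg _ hz0] at hmin
        have hvy : v x ≤ v y := by omega
        unfold gval
        rw [if_neg hx0, if_neg hy0]
        omega
  have geq : ∀ x y : L, x - y ∈ O → gval v x = gval v y := by
    intro x y h
    have h2 : y - x ∈ O := by
      have := O.neg_mem h; simpa using this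
    exact le_antisymm (gle x y h) (gle y x h2)
  have gsig : ∀ x : L, gval v (σ x) = gval v x := by
    intro x
    by_cases hx : x = 0
    · rw [hx, map_zero]
    · have hsx : σ x ≠ 0 := fun h0 => hx (by simpa using σ.injective (by simpa using h0))
      unfold gval
      rw [if_neg hx, if_neg hsx, hσv x hx]
  have gt_mul : ∀ x : L, min (gval v x + 1) 0 ≤ gval v (t * x) := by
    intro x
    by_cases hx : x = 0
    · rw [hx, mul_zero]
      unfold gval
      simp
    · have htx : t * x ≠ 0 := mul_ne_zero ht0 hx
      have h := hv_mul t x ht0 hx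
      unfold gval
      rw [if_neg hx, if_neg htx]
      omega
  -- the minimum
  have hne : (Finset.univ : Finset (ZMod N)).Nonempty := Finset.univ_nonempty
  set m := Finset.inf' Finset.univ hne (fun i => gval v (c i)) with hm
  have hm_le : ∀ i : ZMod N, m ≤ gval v (c i) := fun i =>
    Finset.inf'_le _ (Finset.mem_univ i)
  obtain ⟨j0, _, hj0⟩ := Finset.exists_mem_eq_inf' hne (fun i => gval v (c i))
  have hm_le0 : m ≤ 0 := by rw [hm, hj0]; exact gval_le_zero v (c j0)
  -- main claim: 0 ≤ m
  have hmain : 0 ≤ m := by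
    rcases hyp with ⟨hall, i0, hsp⟩ | ⟨hall, i0, hsp⟩
    · -- case a: forward chain from i0 + 1
      set d : ℕ → ℤ := fun k => gval v (c (i0 + 1 + (k : ZMod N))) with hd
      have h0 : min (m + 1) 0 ≤ d 0 := by
        have h1 : gval v (t * σ (c i0)) = gval v (c (i0 + 1)) := geq _ _ hsp
        have h2 := gt_mul (σ (c i0))
        rw [gsig] at h2
        have h3 := hm_le i0
        simp only [hd, Nat.cast_zero, add_zero]
        omega
      have hs : ∀ k, d k = d (k + 1) ∨ min (d k + 1) 0 ≤ d (k + 1) := by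
        intro k
        have hcast : (i0 + 1 + ((k : ℕ) : ZMod N)) + 1 = i0 + 1 + (((k + 1 : ℕ)) : ZMod N) := by
          push_cast; ring
        rcases hall (i0 + 1 + (k : ZMod N)) with h | h
        · left
          have := geq _ _ h
          rw [gsig] at this
          simp only [hd, ← hcast]
          exact this
        · right
          have h1 : gval v (t * σ (c (i0 + 1 + (k : ZMod N)))) =
              gval v (c (i0 + 1 + (k : ZMod N) + 1)) := geq _ _ h
          have h2 := gt_mul (σ (c (i0 + 1 + (k : ZMod N))))
          rw [gsig] at h2
          simp only [hd, ← hcast]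
          omega
      have hall_k := aux_chain m d h0 hs
      have hk := hall_k (j0 - (i0 + 1)).val
      have : i0 + 1 + (((j0 - (i0 + 1)).val : ℕ) : ZMod N) = j0 := by
        rw [ZMod.natCast_val, ZMod.cast_id]; ring
      have hk' : min (m + 1) 0 ≤ gval v (c (i0 + 1 + (((j0 - (i0 + 1)).val : ℕ) : ZMod N))) := hk
      rw [this] at hk'
      omega
    · -- case b: backward chain from i0
      set d : ℕ → ℤ := fun k => gval v (c (i0 - (k : ZMod N))) with hd
      have h0 : min (m + 1) 0 ≤ d 0 := by
        have h1 : gval v (σ (c i0)) = gval v (t * c (i0 + 1)) := geq _ _ hsp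
        rw [gsig] at h1
        have h2 := gt_mul (c (i0 + 1))
        have h3 := hm_le (i0 + 1)
        simp only [hd, Nat.cast_zero, sub_zero]
        omega
      have hs : ∀ k, d k = d (k + 1) ∨ min (d k + 1) 0 ≤ d (k + 1) := by
        intro k
        have hcast : (i0 - (((k + 1 : ℕ)) : ZMod N)) + 1 = i0 - ((k : ℕ) : ZMod N) := by
          push_cast; ring
        rcases hall (i0 - (((k + 1 : ℕ)) : ZMod N)) with h | h
        · left
          have := geq _ _ h
          rw [gsig, hcast] at this
          simp only [hd]
          exact this.symm
        · right
          have h1 : gval v (σ (c (i0 - (((k + 1 : ℕ)) : ZMod N)))) =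
              gval v (t * c (i0 - (((k + 1 : ℕ)) : ZMod N) + 1)) := geq _ _ h
          rw [gsig, hcast] at h1
          have h2 := gt_mul (c (i0 - ((k : ℕ) : ZMod N)))
          simp only [hd]
          omega
      have hall_k := aux_chain m d h0 hs
      have hk := hall_k (i0 - j0).val
      have : i0 - (((i0 - j0).val : ℕ) : ZMod N) = j0 := by
        rw [ZMod.natCast_val, ZMod.cast_id]; ring
      have hk' : min (m + 1) 0 ≤ gval v (c (i0 - (((i0 - j0).val : ℕ) : ZMod N))) := hk
      rw [this] at hk'
      omega
  intro i
  rw [← gval_nonneg_iff v O hO]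
  have := hm_le i
  omega
end

section
/- Let 1 ≤ n < m. For C = (c_{ij}) ∈ M_{n×m}(L) write h(C) = τ_n·σ(C) − C·τ_m ∈ M_{n×m}(L), and define S = {C ∈ M_{n×m}(L) : h(C)_{n,1} ∈ t𝒪_L and h(C)_{ij} ∈ 𝒪_L for all (i,j)}. Then: (1) S is an additive subgroup of M_{n×m}(L) containing M_{n×m}(𝒪_L); (2) every C ∈ S satisfies c_{i,m} ∈ t^{−1}𝒪_L for 1 ≤ i ≤ n−1; and (3) the map C ↦ (c_{1,m} + 𝒪_L, …, c_{n−1,m} + 𝒪_L) induces a bijection from the quotient group S / M_{n×m}(𝒪_L) onto (t^{−1}𝒪_L/𝒪_L)^{n−1}. -/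
open Pointwise

/-- The canonical superbasic element `τ_r`: the `r×r` matrix with `t` in position `(r,1)`,
`1` on the superdiagonal, and `0` elsewhere (1-indexed); `τ_1 = (t)`. -/
def tau {L : Type*} [Field L] (t : L) (r : ℕ) : Matrix (Fin r) (Fin r) L :=
  Matrix.of fun i j =>
    if (i : ℕ) + 1 = (j : ℕ) then 1 else if (i : ℕ) = r - 1 ∧ (j : ℕ) = 0 then t else 0

private lemma dvd_succ_iff_mod (q a : ℕ) (hq : 0 < q) : q ∣ a + 1 ↔ a % q = q - 1 := by
  rw [Nat.dvd_iff_mod_eq_zero]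
  constructor
  · intro h1
    have h3 := Nat.div_add_mod a q
    have h4 : a % q < q := Nat.mod_lt _ hq
    rcases Nat.lt_trichotomy (a % q) (q-1) with hlt | he | hgt
    · exfalso
      have : (a+1) % q = a % q + 1 := by
        conv_lhs => rw [← h3]
        rw [Nat.add_assoc, Nat.mul_add_mod]
        exact Nat.mod_eq_of_lt (by omega)
      omega
    · exact he
    · omega
  · intro h1
    have h3 := Nat.div_add_mod a q
    rw [h1] at h3
    have : a + 1 = q * (a/q + 1) := by rw [Nat.mul_add]; omega
    rw [this, Nat.mul_mod_right]

private lemma div_succ_eq (q a : ℕ) (hq : 0 < q) :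
    (a+1)/q = a/q + if a % q = q - 1 then 1 else 0 := by
  rw [Nat.succ_div]
  congr 1
  simp only [dvd_succ_iff_mod q a hq]

private lemma mod_succ_eq (q a : ℕ) (hq : 0 < q) :
    (a+1) % q = if a % q = q - 1 then 0 else a % q + 1 := by
  have h1 := Nat.div_add_mod a q
  have h2 := Nat.div_add_mod (a+1) q
  have h3 := div_succ_eq q a hq
  have h4 : a % q < q := Nat.mod_lt _ hq
  have h5 : (a+1) % q < q := Nat.mod_lt _ hq
  split
  · next h =>
    rw [h3, if_pos h, Nat.mul_add] at h2
    omega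
  · next h =>
    rw [h3, if_neg h, Nat.add_zero] at h2
    omega

private lemma div_bound1 (n m r c k : ℕ) (hn : 0 < n) (hnm : n < m) (hr : r < n) (hc : c < m) :
    (c+k)/m ≤ (r+k)/n + 1 := by
  have hm : 0 < m := hn.trans hnm
  have h1 := Nat.div_add_mod (r+k) n
  have h2 : (r+k) % n < n := Nat.mod_lt _ hn
  have h3 : n * ((r+k)/n) ≤ m * ((r+k)/n) := Nat.mul_le_mul_right _ hnm.le
  have h5 := Nat.div_add_mod (c+k) m
  have h6 : (c+k) % m < m := Nat.mod_lt _ hm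
  -- suppose (c+k)/m ≥ (r+k)/n + 2, derive contradiction
  by_contra hcon
  have h7 : (r+k)/n + 2 ≤ (c+k)/m := by omega
  have h8 : m * ((r+k)/n + 2) ≤ m * ((c+k)/m) := Nat.mul_le_mul_left _ h7
  have h9 : m * ((r+k)/n + 2) = m * ((r+k)/n) + 2*m := by ring
  omega

private lemma div_bound2 (n m r c k : ℕ) (hn : 0 < n) (hnm : n < m) (hr : r < n) (hc : c < m)
    (hcr : c + n ≤ r + m) : (c+k)/m ≤ (r+k)/n := by
  have hm : 0 < m := hn.trans hnm
  have h1 := Nat.div_add_mod (r+k) n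
  have h2 : (r+k) % n < n := Nat.mod_lt _ hn
  have h3 : n * ((r+k)/n) ≤ m * ((r+k)/n) := Nat.mul_le_mul_right _ hnm.le
  have h5 := Nat.div_add_mod (c+k) m
  have h6 : (c+k) % m < m := Nat.mod_lt _ hm
  by_contra hcon
  have h7 : (r+k)/n + 1 ≤ (c+k)/m := by omega
  have h8 : m * ((r+k)/n + 1) ≤ m * ((c+k)/m) := Nat.mul_le_mul_left _ h7
  have h9 : m * ((r+k)/n + 1) = m * ((r+k)/n) + m := by ring
  omega

private lemma engine_seq (n m : ℕ) (hn : 0 < n) (hnm : n < m) (r c : ℕ) (hr : r < n) (hc : c < m)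
    (W : ℕ → ℤ) (hW0 : ∀ k, W k ≤ 0) (B : ℤ) (hB : ∀ k, B ≤ W k)
    (hstep : ∀ k, min (W (k+1) + ((if (r+k) % n = n-1 then 1 else 0) -
      (if (c+k) % m = m-1 then 1 else 0))) 0 ≤ W k) :
    (-1 ≤ W 0) ∧ (c + n ≤ r + m → W 0 = 0) := by
  have hm : 0 < m := hn.trans hnm
  set T : ℕ → ℤ := fun k => (((r+k)/n : ℕ) : ℤ) - (((c+k)/m : ℕ) : ℤ) with hT
  have hT0 : T 0 = 0 := by
    have e1 : (r+0)/n = 0 := Nat.div_eq_of_lt (by omega)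
    have e2 : (c+0)/m = 0 := Nat.div_eq_of_lt (by omega)
    simp only [hT, e1, e2, Nat.cast_zero, sub_zero]
  have hTstep : ∀ k, T (k+1) = T k + ((if (r+k) % n = n-1 then (1:ℤ) else 0) -
      (if (c+k) % m = m-1 then 1 else 0)) := by
    intro k
    have e1 : r + (k+1) = (r+k)+1 := by omega
    have e2 : c + (k+1) = (c+k)+1 := by omega
    simp only [hT, e1, e2, div_succ_eq n (r+k) hn, div_succ_eq m (c+k) hm]
    push_cast [apply_ite (fun x : ℕ => (x : ℤ))]
    split <;> split <;> ring
  have hQ : ∀ k (u : ℤ), (∀ j, j ≤ k → u ≤ T j) → min (W k + T k) u ≤ W 0 := by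
    intro k
    induction k with
    | zero =>
      intro u hu
      rw [hT0, add_zero]
      exact min_le_left _ _
    | succ k ih =>
      intro u hu
      have h1 : min (W (k+1) + T (k+1)) (T k) ≤ W k + T k := by
        have hs := hstep k
        have h2 := hTstep k
        omega
      have ih' := ih u (fun j hj => hu j (hj.trans (Nat.le_succ k)))
      have huk := hu k (Nat.le_succ k)
      omega
  have hTlb : ∀ j, (-1 : ℤ) ≤ T j := by
    intro j
    have := div_bound1 n m r c j hn hnm hr hc
    simp only [hT]
    omega
  -- growth

  -- growth along multiples of n*m
  have hgrow : ∀ K : ℕ, T (n*m*K) = (m:ℤ)*K - (n:ℤ)*K := by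
    intro K
    have e1 : r + n*m*K = r + n*(m*K) := by ring
    have e2 : c + n*m*K = c + m*(n*K) := by ring
    have d1 : (r + n*m*K)/n = m*K := by
      rw [e1, Nat.add_mul_div_left _ _ hn, Nat.div_eq_of_lt hr, Nat.zero_add]
    have d2 : (c + n*m*K)/m = n*K := by
      rw [e2, Nat.add_mul_div_left _ _ hm, Nat.div_eq_of_lt hc, Nat.zero_add]
    simp only [hT, d1, d2]
    push_cast
    ring
  set K : ℕ := B.natAbs with hK
  set k0 : ℕ := n*m*K with hk0
  have hWT : 0 ≤ W k0 + T k0 := by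
    have h1 := hgrow K
    have h2 : (-B) ≤ (K:ℤ) := by
      rw [hK]
      have := neg_abs_le B
      rw [Int.abs_eq_natAbs] at this
      omega
    have h3 : (1:ℤ) * (K:ℤ) ≤ ((m:ℤ) - (n:ℤ)) * (K:ℤ) := by
      apply mul_le_mul_of_nonneg_right _ (Int.natCast_nonneg K)
      have : (n:ℤ) + 1 ≤ (m:ℤ) := by exact_mod_cast hnm
      omega
    have h4 : ((m:ℤ) - (n:ℤ)) * (K:ℤ) = (m:ℤ)*K - (n:ℤ)*K := by ring
    have h5 := hB k0
    rw [← hk0] at h1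
    omega
  constructor
  · have h6 := hQ k0 (-1) (fun j _ => hTlb j)
    omega
  · intro hgood
    have hTgood : ∀ j, (0:ℤ) ≤ T j := by
      intro j
      have := div_bound2 n m r c j hn hnm hr hc (by omega)
      simp only [hT]
      omega
    have h6 := hQ k0 0 (fun j _ => hTgood j)
    have h7 := hW0 0
    omega



private lemma tau_mul_apply {L : Type*} [Field L] (t : L) {n m : ℕ} (hn : 0 < n)
    (A : Matrix (Fin n) (Fin m) L) (i : Fin n) (j : Fin m) :
    (tau t n * A) i j = if h : (i:ℕ)+1 < n then A ⟨(i:ℕ)+1, h⟩ j else t * A ⟨0, hn⟩ j := by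
  rw [Matrix.mul_apply]
  split
  · next h =>
    rw [Finset.sum_eq_single (⟨(i:ℕ)+1, h⟩ : Fin n)]
    · have h0 : tau t n i ⟨(i:ℕ)+1, h⟩ = 1 := by simp [tau]
      rw [h0, one_mul]
    · intro k _ hk
      have h1 : ¬((i:ℕ)+1 = (k:ℕ)) := fun hc => hk (Fin.ext hc.symm)
      have h2 : ¬((i:ℕ) = n-1 ∧ (k:ℕ) = 0) := by rintro ⟨h3, -⟩; omega
      simp [tau, h1, h2]
    · intro h; exact absurd (Finset.mem_univ _) h
  · next h =>
    have hi : (i:ℕ) = n - 1 := by have := i.isLt; omega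
    rw [Finset.sum_eq_single (⟨0, hn⟩ : Fin n)]
    · have h0 : tau t n i ⟨0, hn⟩ = t := by
        simp [tau, hi]
      rw [h0]
    · intro k _ hk
      have hkv : (k:ℕ) ≠ 0 := fun hc => hk (Fin.ext hc)
      have h1 : ¬((i:ℕ)+1 = (k:ℕ)) := by have := k.isLt; omega
      have h2 : ¬((i:ℕ) = n-1 ∧ (k:ℕ) = 0) := by rintro ⟨-, h3⟩; exact hkv h3
      simp [tau, h1, h2]
    · intro h; exact absurd (Finset.mem_univ _) h

private lemma mul_tau_apply {L : Type*} [Field L] (t : L) {n m : ℕ} (hm : 0 < m)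
    (A : Matrix (Fin n) (Fin m) L) (i : Fin n) (j : Fin m) :
    (A * tau t m) i j = if h : 0 < (j:ℕ) then
        A i ⟨(j:ℕ)-1, Nat.lt_of_le_of_lt (Nat.sub_le _ _) j.isLt⟩
      else A i ⟨m-1, Nat.sub_lt hm Nat.one_pos⟩ * t := by
  rw [Matrix.mul_apply]
  split
  · next h =>
    rw [Finset.sum_eq_single (⟨(j:ℕ)-1, Nat.lt_of_le_of_lt (Nat.sub_le _ _) j.isLt⟩ : Fin m)]
    · have h0 : tau t m (⟨(j:ℕ)-1, Nat.lt_of_le_of_lt (Nat.sub_le _ _) j.isLt⟩ : Fin m) j = 1 := by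
        simp only [tau, Matrix.of_apply]
        rw [if_pos (by omega)]
      rw [h0, mul_one]
    · intro k _ hk
      have hkv : (k:ℕ) ≠ (j:ℕ)-1 := fun hc => hk (Fin.ext hc)
      have h1 : ¬((k:ℕ)+1 = (j:ℕ)) := by omega
      have h2 : ¬((k:ℕ) = m-1 ∧ (j:ℕ) = 0) := by rintro ⟨-, h3⟩; omega
      simp [tau, h1, h2]
    · intro h; exact absurd (Finset.mem_univ _) h
  · next h =>
    have hj : (j:ℕ) = 0 := by omega
    rw [Finset.sum_eq_single (⟨m-1, Nat.sub_lt hm Nat.one_pos⟩ : Fin m)]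
    · have h0 : tau t m (⟨m-1, Nat.sub_lt hm Nat.one_pos⟩ : Fin m) j = t := by
        simp [tau, hj]
      rw [h0]
    · intro k _ hk
      have hkv : (k:ℕ) ≠ m-1 := fun hc => hk (Fin.ext hc)
      have h1 : ¬((k:ℕ)+1 = (j:ℕ)) := by omega
      have h2 : ¬((k:ℕ) = m-1 ∧ (j:ℕ) = 0) := by rintro ⟨h3, -⟩; exact hkv h3
      simp [tau, h1, h2]
    · intro h; exact absurd (Finset.mem_univ _) h

private lemma entry_formula {L : Type*} [Field L] (t : L) {n m : ℕ} (hn : 0 < n) (hm : 0 < m)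
    (σ : L ≃+* L) (C : Matrix (Fin n) (Fin m) L) (i : Fin n) (j : Fin m) :
    (tau t n * C.map ⇑σ - C * tau t m) i j =
      (if h : (i:ℕ)+1 < n then σ (C ⟨(i:ℕ)+1, h⟩ j) else t * σ (C ⟨0, hn⟩ j)) -
      (if h : 0 < (j:ℕ) then C i ⟨(j:ℕ)-1, Nat.lt_of_le_of_lt (Nat.sub_le _ _) j.isLt⟩
        else C i ⟨m-1, Nat.sub_lt hm Nat.one_pos⟩ * t) := by
  rw [Matrix.sub_apply, tau_mul_apply t hn, mul_tau_apply t hm]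
  simp only [Matrix.map_apply]

open Classical in
private noncomputable def vvv {L : Type*} [Field L] (v : L → ℤ) (x : L) : ℤ :=
  if x = 0 then 0 else min (v x) 0

section vvvlemmas
variable {L : Type*} [Field L] (v : L → ℤ) (t : L)
    (hv_mul : ∀ x y : L, x ≠ 0 → y ≠ 0 → v (x * y) = v x + v y)
    (hv_add : ∀ x y : L, x ≠ 0 → y ≠ 0 → x + y ≠ 0 → min (v x) (v y) ≤ v (x + y))
    (ht0 : t ≠ 0) (ht1 : v t = 1)
    (O : Subring L) (hO : ∀ x : L, x ∈ O ↔ x = 0 ∨ 0 ≤ v x)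

private lemma vvv_le_zero (x : L) : vvv v x ≤ 0 := by
  unfold vvv; split
  · exact le_refl 0
  · exact min_le_right _ _

private lemma vvv_zero : vvv v (0 : L) = 0 := by simp [vvv]

include hO in
private lemma vvv_mem_O (x : L) : x ∈ O ↔ 0 ≤ vvv v x := by
  rw [hO]
  unfold vvv
  split
  · next h => simp [h]
  · next h =>
      simp only [h, false_or]
      omega

include hv_add hO in
private lemma vvv_add_o (x o : L) (ho : o ∈ O) : vvv v (x + o) = vvv v x := by
  have key : ∀ x o : L, o ∈ O → vvv v x ≤ vvv v (x + o) := by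
    intro x o ho
    by_cases hx : x = 0
    · subst hx
      rw [zero_add]
      rw [vvv_zero]
      exact ((vvv_mem_O v O hO o).1 ho)
    · by_cases ho0 : o = 0
      · subst ho0; rw [add_zero]
      · by_cases hxo : x + o = 0
        · rw [hxo, vvv_zero]; exact vvv_le_zero v x
        · have h1 := hv_add x o hx ho0 hxo
          have h2 : 0 ≤ v o := by
            rcases (hO o).1 ho with h | h
            · exact absurd h ho0
            · exact h
          simp only [vvv, if_neg hx, if_neg hxo]
          omega
  have h1 := key x o ho
  have h2 := key (x + o) (-o) (neg_mem ho)
  rw [add_neg_cancel_right] at h2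
  omega

include hv_mul ht0 ht1 in
private lemma vvv_t_mul (x : L) : vvv v (t * x) = min (vvv v x + 1) 0 := by
  by_cases hx : x = 0
  · subst hx; simp [vvv]
  · have htx : t * x ≠ 0 := mul_ne_zero ht0 hx
    simp only [vvv, if_neg hx, if_neg htx, hv_mul t x ht0 hx, ht1]
    omega

private lemma vvv_sigma (σ : L ≃+* L) (hσv : ∀ x : L, x ≠ 0 → v (σ x) = v x) (x : L) :
    vvv v (σ x) = vvv v x := by
  by_cases hx : x = 0
  · subst hx; simp [vvv]
  · have hsx : σ x ≠ 0 := by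
      intro hc
      exact hx (by simpa using congrArg σ.symm hc)
    simp only [vvv, if_neg hx, if_neg hsx, hσv x hx]

end vvvlemmas

private lemma mat_congr {L : Type*} [Field L] {n m : ℕ} (C : Matrix (Fin n) (Fin m) L)
    {a a' b b' : ℕ} (ha : a < n) (ha' : a' < n) (hb : b < m) (hb' : b' < m)
    (e1 : a = a') (e2 : b = b') : C ⟨a, ha⟩ ⟨b, hb⟩ = C ⟨a', ha'⟩ ⟨b', hb'⟩ := by
  subst e1; subst e2; rfl

section entries
variable {L : Type*} [Field L] (t : L) {n m : ℕ} (hn : 0 < n) (hm : 0 < m) (σ : L ≃+* L)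
  (C : Matrix (Fin n) (Fin m) L)
include hn hm

private lemma entryA (a b : ℕ) (ha1 : a+1 < n) (ha : a < n) (hb1 : b+1 < m) (hb : b < m) :
    (tau t n * C.map ⇑σ - C * tau t m) ⟨a, ha⟩ ⟨b+1, hb1⟩
      = σ (C ⟨a+1, ha1⟩ ⟨b+1, hb1⟩) - C ⟨a, ha⟩ ⟨b, hb⟩ := by
  rw [entry_formula t hn hm σ C ⟨a, ha⟩ ⟨b+1, hb1⟩, dif_pos ha1, dif_pos (Nat.succ_pos b)]
  rfl

private lemma entryB (a : ℕ) (ha1 : a+1 < n) (ha : a < n) :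
    (tau t n * C.map ⇑σ - C * tau t m) ⟨a, ha⟩ ⟨0, hm⟩
      = σ (C ⟨a+1, ha1⟩ ⟨0, hm⟩) - C ⟨a, ha⟩ ⟨m-1, Nat.sub_lt hm Nat.one_pos⟩ * t := by
  rw [entry_formula t hn hm σ C ⟨a, ha⟩ ⟨0, hm⟩, dif_pos ha1, dif_neg (lt_irrefl 0)]

private lemma entryC (b : ℕ) (hb1 : b+1 < m) (hb : b < m) (hn1 : n-1 < n) :
    (tau t n * C.map ⇑σ - C * tau t m) ⟨n-1, hn1⟩ ⟨b+1, hb1⟩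
      = t * σ (C ⟨0, hn⟩ ⟨b+1, hb1⟩) - C ⟨n-1, hn1⟩ ⟨b, hb⟩ := by
  rw [entry_formula t hn hm σ C ⟨n-1, hn1⟩ ⟨b+1, hb1⟩, dif_neg (by omega : ¬(n-1+1 < n)),
    dif_pos (Nat.succ_pos b)]
  rfl

private lemma entryD (hn1 : n-1 < n) :
    (tau t n * C.map ⇑σ - C * tau t m) ⟨n-1, hn1⟩ ⟨0, hm⟩
      = t * σ (C ⟨0, hn⟩ ⟨0, hm⟩) - C ⟨n-1, hn1⟩ ⟨m-1, Nat.sub_lt hm Nat.one_pos⟩ * t := by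
  rw [entry_formula t hn hm σ C ⟨n-1, hn1⟩ ⟨0, hm⟩, dif_neg (by omega : ¬(n-1+1 < n)),
    dif_neg (lt_irrefl 0)]

end entries


/-- For `1 ≤ n < m` and the canonical Drinfeld two-block configuration,
the solution set `S = {C : τ_n σ(C) − C τ_m has its (n,1) entry in t𝒪_L and all entries in
𝒪_L}` is an additive subgroup of `M_{n×m}(L)` containing `M_{n×m}(𝒪_L)`, every `C ∈ S` has
`c_{i,m} ∈ t⁻¹𝒪_L` for `1 ≤ i ≤ n−1`, and `C ↦ (c_{1,m} + 𝒪_L, …, c_{n−1,m} + 𝒪_L)`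
induces a bijection `S / M_{n×m}(𝒪_L) ≃ (t⁻¹𝒪_L/𝒪_L)^{n−1}`. -/
theorem stmt_8 {L : Type*} [Field L] (v : L → ℤ) (t : L)
    (hv_mul : ∀ x y : L, x ≠ 0 → y ≠ 0 → v (x * y) = v x + v y)
    (hv_add : ∀ x y : L, x ≠ 0 → y ≠ 0 → x + y ≠ 0 → min (v x) (v y) ≤ v (x + y))
    (hv_surj : ∀ n : ℤ, ∃ x : L, x ≠ 0 ∧ v x = n)
    (ht0 : t ≠ 0) (ht1 : v t = 1)
    (O : Subring L) (hO : ∀ x : L, x ∈ O ↔ x = 0 ∨ 0 ≤ v x)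
    (σ : L ≃+* L) (hσt : σ t = t) (hσv : ∀ x : L, x ≠ 0 → v (σ x) = v x)
    (n m : ℕ) (hn : 1 ≤ n) (hnm : n < m)
    (S : Set (Matrix (Fin n) (Fin m) L))
    (hS : S = {C | (∀ i j, (tau t n * C.map ⇑σ - C * tau t m) i j ∈ O) ∧
        (tau t n * C.map ⇑σ - C * tau t m) (⟨n - 1, by omega⟩ : Fin n) (⟨0, by omega⟩ : Fin m)
          ∈ t • (O : Set L)}) :
    -- (1) `S` is an additive subgroup of `M_{n×m}(L)` containing `M_{n×m}(𝒪_L)`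
    (0 ∈ S) ∧
    (∀ C₁ ∈ S, ∀ C₂ ∈ S, C₁ + C₂ ∈ S) ∧
    (∀ C ∈ S, -C ∈ S) ∧
    (∀ C : Matrix (Fin n) (Fin m) L, (∀ i j, C i j ∈ O) → C ∈ S) ∧
    -- (2) every `C ∈ S` has `c_{i,m} ∈ t⁻¹𝒪_L` for `1 ≤ i ≤ n−1`
    (∀ C ∈ S, ∀ i : Fin n, (i : ℕ) < n - 1 →
      C i (⟨m - 1, by omega⟩ : Fin m) ∈ t⁻¹ • (O : Set L)) ∧
    -- (3a) the last-column map separates points of `S` exactly modulo `M_{n×m}(𝒪_L)`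
    (∀ C₁ ∈ S, ∀ C₂ ∈ S,
      ((∀ i : Fin (n - 1),
          (QuotientAddGroup.mk (C₁ (Fin.castLE (by omega) i) (⟨m - 1, by omega⟩ : Fin m)) :
              L ⧸ O.toAddSubgroup) =
            QuotientAddGroup.mk (C₂ (Fin.castLE (by omega) i) (⟨m - 1, by omega⟩ : Fin m)))
        ↔ ∀ i j, (C₁ - C₂) i j ∈ O)) ∧
    -- (3b) the last-column map hits every element of `(t⁻¹𝒪_L/𝒪_L)^{n−1}`
    (∀ y : Fin (n - 1) → L ⧸ O.toAddSubgroup,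
      (∀ i, ∃ c ∈ t⁻¹ • (O : Set L), QuotientAddGroup.mk c = y i) →
      ∃ C ∈ S, ∀ i : Fin (n - 1),
        (QuotientAddGroup.mk (C (Fin.castLE (by omega) i) (⟨m - 1, by omega⟩ : Fin m)) :
            L ⧸ O.toAddSubgroup) = y i) := by
  have hn0 : 0 < n := hn
  have hm0 : 0 < m := hn0.trans hnm
  have hm1 : m - 1 < m := Nat.sub_lt hm0 Nat.one_pos
  have hn1 : n - 1 < n := Nat.sub_lt hn0 Nat.one_pos
  have htO : t ∈ O := (hO t).2 (Or.inr (by omega))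
  have hσO : ∀ x : L, x ∈ O → σ x ∈ O := by
    intro x hx
    rcases (hO x).1 hx with h | h
    · rw [h, map_zero]; exact O.zero_mem
    · by_cases h0 : x = 0
      · rw [h0, map_zero]; exact O.zero_mem
      · exact (hO _).2 (Or.inr (by rw [hσv x h0]; exact h))
  have hsmul_mem : ∀ a x : L, a ≠ 0 → (x ∈ a • (O : Set L) ↔ a⁻¹ * x ∈ O) := by
    intro a x ha
    constructor
    · rintro ⟨y, hy, rfl⟩
      simp only [smul_eq_mul]
      rwa [inv_mul_cancel_left₀ ha]
    · intro h
      refine ⟨a⁻¹ * x, h, ?_⟩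
      simp only [smul_eq_mul]
      rw [mul_inv_cancel_left₀ ha]
  have htinv_mem : ∀ x : L, x ∈ t⁻¹ • (O : Set L) ↔ t * x ∈ O := by
    intro x
    rw [hsmul_mem t⁻¹ x (inv_ne_zero ht0), inv_inv]
  have htmul_mem : ∀ x : L, t * x ∈ t • (O : Set L) ↔ x ∈ O := by
    intro x
    rw [hsmul_mem t _ ht0, inv_mul_cancel_left₀ ht0]
  have Vle : ∀ x : L, vvv v x ≤ 0 := fun x => vvv_le_zero v x
  have VO : ∀ x : L, x ∈ O ↔ 0 ≤ vvv v x := vvv_mem_O v O hO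
  have Vadd : ∀ x o : L, o ∈ O → vvv v (x + o) = vvv v x := vvv_add_o v hv_add O hO
  have Vt : ∀ x : L, vvv v (t * x) = min (vvv v x + 1) 0 := vvv_t_mul v t hv_mul ht0 ht1
  have Vσ : ∀ x : L, vvv v (σ x) = vvv v x := vvv_sigma v σ hσv
  -- membership in S, unpacked
  have hS1 : ∀ C ∈ S, ∀ (i : Fin n) (j : Fin m),
      (tau t n * C.map ⇑σ - C * tau t m) i j ∈ O := by
    intro C hC; rw [hS] at hC; exact hC.1
  have hS2 : ∀ C ∈ S,
      (tau t n * C.map ⇑σ - C * tau t m) ⟨n-1, hn1⟩ ⟨0, hm0⟩ ∈ t • (O : Set L) := by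
    intro C hC; rw [hS] at hC; exact hC.2
  have hSin : ∀ C : Matrix (Fin n) (Fin m) L,
      (∀ (i : Fin n) (j : Fin m), (tau t n * C.map ⇑σ - C * tau t m) i j ∈ O) →
      ((tau t n * C.map ⇑σ - C * tau t m) ⟨n-1, hn1⟩ ⟨0, hm0⟩ ∈ t • (O : Set L)) →
      C ∈ S := by
    intro C h1 h2; rw [hS]; exact ⟨h1, h2⟩
  -- the four relations for C ∈ S, in clean form
  have hRA : ∀ C ∈ S, ∀ (a b : ℕ) (ha1 : a+1 < n) (ha : a < n) (hb1 : b+1 < m) (hb : b < m),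
      σ (C ⟨a+1, ha1⟩ ⟨b+1, hb1⟩) - C ⟨a, ha⟩ ⟨b, hb⟩ ∈ O := by
    intro C hC a b ha1 ha hb1 hb
    rw [← entryA t hn0 hm0 σ C a b ha1 ha hb1 hb]
    exact hS1 C hC _ _
  have hRB : ∀ C ∈ S, ∀ (a : ℕ) (ha1 : a+1 < n) (ha : a < n),
      σ (C ⟨a+1, ha1⟩ ⟨0, hm0⟩) - C ⟨a, ha⟩ ⟨m-1, hm1⟩ * t ∈ O := by
    intro C hC a ha1 ha
    rw [← entryB t hn0 hm0 σ C a ha1 ha]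
    exact hS1 C hC _ _
  have hRC : ∀ C ∈ S, ∀ (b : ℕ) (hb1 : b+1 < m) (hb : b < m),
      t * σ (C ⟨0, hn0⟩ ⟨b+1, hb1⟩) - C ⟨n-1, hn1⟩ ⟨b, hb⟩ ∈ O := by
    intro C hC b hb1 hb
    rw [← entryC t hn0 hm0 σ C b hb1 hb hn1]
    exact hS1 C hC _ _
  have hRD : ∀ C ∈ S, σ (C ⟨0, hn0⟩ ⟨0, hm0⟩) - C ⟨n-1, hn1⟩ ⟨m-1, hm1⟩ ∈ O := by
    intro C hC
    have h1 := hS2 C hC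
    rw [entryD t hn0 hm0 σ C hn1] at h1
    have h2 : t * σ (C ⟨0, hn0⟩ ⟨0, hm0⟩) - C ⟨n-1, hn1⟩ ⟨m-1, hm1⟩ * t
        = t * (σ (C ⟨0, hn0⟩ ⟨0, hm0⟩) - C ⟨n-1, hn1⟩ ⟨m-1, hm1⟩) := by ring
    rw [h2, htmul_mem] at h1
    exact h1
  -- The central valuation bound, via the walk engine
  have hEng : ∀ C ∈ S, ∀ (a b : ℕ) (ha : a < n) (hb : b < m),
      (-1 ≤ vvv v (C ⟨a, ha⟩ ⟨b, hb⟩)) ∧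
      (b + n ≤ a + m → vvv v (C ⟨a, ha⟩ ⟨b, hb⟩) = 0) := by
    intro C hC a b ha hb
    set f : ℕ → ℕ → L :=
      fun i j => C ⟨i % n, Nat.mod_lt _ hn0⟩ ⟨j % m, Nat.mod_lt _ hm0⟩ with hf
    have hstepAll : ∀ i j : ℕ,
        min (vvv v (f (i+1) (j+1)) + ((if i % n = n-1 then (1:ℤ) else 0) -
          (if j % m = m-1 then (1:ℤ) else 0))) 0 ≤ vvv v (f i j) := by
      intro i j
      have hA : i % n < n := Nat.mod_lt _ hn0
      have hB : j % m < m := Nat.mod_lt _ hm0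
      have emodn := mod_succ_eq n i hn0
      have emodm := mod_succ_eq m j hm0
      by_cases hA1 : i % n = n-1 <;> by_cases hB1 : j % m = m-1
      · -- row wrap and column wrap : relation D
        rw [if_pos hA1, if_pos hB1]
        have e1 : f (i+1) (j+1) = C ⟨0, hn0⟩ ⟨0, hm0⟩ := by
          simp only [hf]
          exact mat_congr C _ _ _ _ (by rw [emodn, if_pos hA1]) (by rw [emodm, if_pos hB1])
        have e0 : f i j = C ⟨n-1, hn1⟩ ⟨m-1, hm1⟩ := by
          simp only [hf]
          exact mat_congr C _ _ _ _ hA1 hB1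
        rw [e0, e1]
        have h1 := hRD C hC
        have e2 : C ⟨n-1, hn1⟩ ⟨m-1, hm1⟩ = σ (C ⟨0, hn0⟩ ⟨0, hm0⟩) +
            -(σ (C ⟨0, hn0⟩ ⟨0, hm0⟩) - C ⟨n-1, hn1⟩ ⟨m-1, hm1⟩) := by ring
        rw [e2, Vadd _ _ (neg_mem h1), Vσ]
        omega
      · -- row wrap only : relation C
        rw [if_pos hA1, if_neg hB1]
        have hb1 : (j % m) + 1 < m := by omega
        have e1 : f (i+1) (j+1) = C ⟨0, hn0⟩ ⟨(j % m)+1, hb1⟩ := by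
          simp only [hf]
          exact mat_congr C _ _ _ _ (by rw [emodn, if_pos hA1]) (by rw [emodm, if_neg hB1])
        have e0 : f i j = C ⟨n-1, hn1⟩ ⟨j % m, hB⟩ := by
          simp only [hf]
          exact mat_congr C _ _ _ _ hA1 rfl
        rw [e0, e1]
        have h1 := hRC C hC (j % m) hb1 hB
        have e2 : C ⟨n-1, hn1⟩ ⟨j % m, hB⟩ = t * σ (C ⟨0, hn0⟩ ⟨(j % m)+1, hb1⟩) +
            -(t * σ (C ⟨0, hn0⟩ ⟨(j % m)+1, hb1⟩) - C ⟨n-1, hn1⟩ ⟨j % m, hB⟩) := by ring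
        rw [e2, Vadd _ _ (neg_mem h1), Vt, Vσ]
        omega
      · -- column wrap only : relation B
        rw [if_neg hA1, if_pos hB1]
        have ha1 : (i % n) + 1 < n := by omega
        have e1 : f (i+1) (j+1) = C ⟨(i % n)+1, ha1⟩ ⟨0, hm0⟩ := by
          simp only [hf]
          exact mat_congr C _ _ _ _ (by rw [emodn, if_neg hA1]) (by rw [emodm, if_pos hB1])
        have e0 : f i j = C ⟨i % n, hA⟩ ⟨m-1, hm1⟩ := by
          simp only [hf]
          exact mat_congr C _ _ _ _ rfl hB1
        rw [e0, e1]
        have h1 := hRB C hC (i % n) ha1 hA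
        have e2 : t * C ⟨i % n, hA⟩ ⟨m-1, hm1⟩ = σ (C ⟨(i % n)+1, ha1⟩ ⟨0, hm0⟩) +
            -(σ (C ⟨(i % n)+1, ha1⟩ ⟨0, hm0⟩) - C ⟨i % n, hA⟩ ⟨m-1, hm1⟩ * t) := by ring
        have e3 : vvv v (t * C ⟨i % n, hA⟩ ⟨m-1, hm1⟩)
            = vvv v (C ⟨(i % n)+1, ha1⟩ ⟨0, hm0⟩) := by
          rw [e2, Vadd _ _ (neg_mem h1), Vσ]
        rw [Vt] at e3
        omega
      · -- no wrap : relation A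
        rw [if_neg hA1, if_neg hB1]
        have ha1 : (i % n) + 1 < n := by omega
        have hb1 : (j % m) + 1 < m := by omega
        have e1 : f (i+1) (j+1) = C ⟨(i % n)+1, ha1⟩ ⟨(j % m)+1, hb1⟩ := by
          simp only [hf]
          exact mat_congr C _ _ _ _ (by rw [emodn, if_neg hA1]) (by rw [emodm, if_neg hB1])
        have e0 : f i j = C ⟨i % n, hA⟩ ⟨j % m, hB⟩ := by simp only [hf]
        rw [e0, e1]
        have h1 := hRA C hC (i % n) (j % m) ha1 hA hb1 hB
        have e2 : C ⟨i % n, hA⟩ ⟨j % m, hB⟩ = σ (C ⟨(i % n)+1, ha1⟩ ⟨(j % m)+1, hb1⟩) +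
            -(σ (C ⟨(i % n)+1, ha1⟩ ⟨(j % m)+1, hb1⟩) - C ⟨i % n, hA⟩ ⟨j % m, hB⟩) := by ring
        rw [e2, Vadd _ _ (neg_mem h1), Vσ]
        omega
    -- global lower bound
    have hBnd : ∃ B : ℤ, ∀ i j : ℕ, B ≤ vvv v (f i j) := by
      refine ⟨Finset.inf' Finset.univ ⟨(⟨0, hn0⟩, ⟨0, hm0⟩), Finset.mem_univ _⟩
        (fun p : Fin n × Fin m => vvv v (C p.1 p.2)), ?_⟩
      intro i j
      exact Finset.inf'_le _ (Finset.mem_univ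
        ((⟨i % n, Nat.mod_lt _ hn0⟩ : Fin n), (⟨j % m, Nat.mod_lt _ hm0⟩ : Fin m)))
    obtain ⟨B, hB'⟩ := hBnd
    have hengine := engine_seq n m hn0 hnm a b ha hb
      (fun k => vvv v (f (a+k) (b+k)))
      (fun k => Vle _) B (fun k => hB' _ _)
      (fun k => hstepAll (a+k) (b+k))
    have e0 : f (a+0) (b+0) = C ⟨a, ha⟩ ⟨b, hb⟩ := by
      simp only [hf]
      exact mat_congr C _ _ _ _ (by exact Nat.mod_eq_of_lt (by omega)) (by exact Nat.mod_eq_of_lt (by omega))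
    rw [← e0]
    exact hengine
  -- algebraic identities for the defect map
  have hEadd : ∀ C₁ C₂ : Matrix (Fin n) (Fin m) L,
      tau t n * (C₁ + C₂).map ⇑σ - (C₁ + C₂) * tau t m
        = (tau t n * C₁.map ⇑σ - C₁ * tau t m) + (tau t n * C₂.map ⇑σ - C₂ * tau t m) := by
    intro C₁ C₂
    have h1 : (C₁ + C₂).map ⇑σ = C₁.map ⇑σ + C₂.map ⇑σ := by
      ext i j
      simp [Matrix.map_apply, Matrix.add_apply, map_add]
    rw [h1, Matrix.mul_add, Matrix.add_mul]
    abel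
  have hEneg : ∀ C : Matrix (Fin n) (Fin m) L,
      tau t n * (-C).map ⇑σ - (-C) * tau t m
        = -(tau t n * C.map ⇑σ - C * tau t m) := by
    intro C
    have h1 : (-C).map ⇑σ = -(C.map ⇑σ) := by
      ext i j
      simp [Matrix.map_apply, Matrix.neg_apply, map_neg]
    rw [h1, Matrix.mul_neg, Matrix.neg_mul]
    abel
  have hE0 : tau t n * (0 : Matrix (Fin n) (Fin m) L).map ⇑σ
      - (0 : Matrix (Fin n) (Fin m) L) * tau t m = 0 := by
    have h1 : (0 : Matrix (Fin n) (Fin m) L).map ⇑σ = 0 := by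
      ext i j
      simp [Matrix.map_apply]
    rw [h1, Matrix.mul_zero, Matrix.zero_mul, sub_zero]
  have htsmul0 : (0:L) ∈ t • (O : Set L) := ⟨0, O.zero_mem, smul_zero t⟩
  have htsmul_add : ∀ x y : L, x ∈ t • (O : Set L) → y ∈ t • (O : Set L) →
      x + y ∈ t • (O : Set L) := by
    rintro x y ⟨x1, hx1, rfl⟩ ⟨y1, hy1, rfl⟩
    exact ⟨x1 + y1, O.add_mem hx1 hy1, by simp only [smul_eq_mul]; ring⟩
  have htsmul_neg : ∀ x : L, x ∈ t • (O : Set L) → -x ∈ t • (O : Set L) := by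
    rintro x ⟨x1, hx1, rfl⟩
    exact ⟨-x1, neg_mem hx1, by simp⟩
  -- Part (1)
  have part0 : (0 : Matrix (Fin n) (Fin m) L) ∈ S := by
    apply hSin
    · intro i j; rw [hE0]; simp only [Matrix.zero_apply]; exact O.zero_mem
    · rw [hE0]; simp only [Matrix.zero_apply]; exact htsmul0
  have partAdd : ∀ C₁ ∈ S, ∀ C₂ ∈ S, C₁ + C₂ ∈ S := by
    intro C₁ h₁ C₂ h₂
    apply hSin
    · intro i j
      rw [hEadd, Matrix.add_apply]
      exact O.add_mem (hS1 C₁ h₁ i j) (hS1 C₂ h₂ i j)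
    · rw [hEadd, Matrix.add_apply]
      exact htsmul_add _ _ (hS2 C₁ h₁) (hS2 C₂ h₂)
  have partNeg : ∀ C ∈ S, -C ∈ S := by
    intro C hC
    apply hSin
    · intro i j
      rw [hEneg, Matrix.neg_apply]
      exact neg_mem (hS1 C hC i j)
    · rw [hEneg, Matrix.neg_apply]
      exact htsmul_neg _ (hS2 C hC)
  have partO : ∀ C : Matrix (Fin n) (Fin m) L, (∀ i j, C i j ∈ O) → C ∈ S := by
    intro C hCO
    apply hSin
    · intro i j
      rw [entry_formula t hn0 hm0 σ C i j]
      apply O.sub_mem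
      · split
        · exact hσO _ (hCO _ _)
        · exact O.mul_mem htO (hσO _ (hCO _ _))
      · split
        · exact hCO _ _
        · exact O.mul_mem (hCO _ _) htO
    · rw [entryD t hn0 hm0 σ C hn1]
      have e : t * σ (C ⟨0,hn0⟩ ⟨0,hm0⟩) - C ⟨n-1,hn1⟩ ⟨m-1, Nat.sub_lt hm0 Nat.one_pos⟩ * t
          = t * (σ (C ⟨0,hn0⟩ ⟨0,hm0⟩) - C ⟨n-1,hn1⟩ ⟨m-1, Nat.sub_lt hm0 Nat.one_pos⟩) := by
        ring
      rw [e, htmul_mem]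
      exact O.sub_mem (hσO _ (hCO _ _)) (hCO _ _)
  -- Part (2)
  have part2 : ∀ C ∈ S, ∀ i : Fin n, (i:ℕ) < n-1 →
      C i (⟨m-1, hm1⟩ : Fin m) ∈ t⁻¹ • (O : Set L) := by
    intro C hC i hi
    obtain ⟨a, ha⟩ := i
    rw [htinv_mem, VO, Vt]
    have h1 := (hEng C hC a (m-1) ha hm1).1
    omega
  -- chain lemma
  have hchain : ∀ C ∈ S, (∀ (a : ℕ) (ha : a < n), a < n-1 → C ⟨a, ha⟩ ⟨m-1, hm1⟩ ∈ O) →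
      ∀ (i : Fin n) (j : Fin m), C i j ∈ O := by
    intro C hC hcol i j
    obtain ⟨a, ha⟩ := i
    obtain ⟨b, hb⟩ := j
    by_cases hgood : b + n ≤ a + m
    · rw [VO, (hEng C hC a b ha hb).2 hgood]
    · have key : ∀ s : ℕ, ∀ (a b : ℕ) (ha : a < n) (hb : b < m), m-1-b = s →
          a + m + 1 ≤ b + n → vvv v (C ⟨a, ha⟩ ⟨b, hb⟩) = 0 := by
        intro s
        induction s with
        | zero =>
          intro a b ha hb hs hbad
          have e : C ⟨a,ha⟩ ⟨b,hb⟩ = C ⟨a,ha⟩ ⟨m-1,hm1⟩ := mat_congr C _ _ _ _ rfl (by omega)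
          rw [e]
          have h1 := hcol a ha (by omega)
          rw [VO] at h1
          have h2 := Vle (C ⟨a,ha⟩ ⟨m-1,hm1⟩)
          omega
        | succ s ih =>
          intro a b ha hb hs hbad
          have ha1 : a + 1 < n := by omega
          have hb1 : b + 1 < m := by omega
          have h1 := hRA C hC a b ha1 ha hb1 hb
          have e2 : C ⟨a,ha⟩ ⟨b,hb⟩ = σ (C ⟨a+1,ha1⟩ ⟨b+1,hb1⟩) +
              -(σ (C ⟨a+1,ha1⟩ ⟨b+1,hb1⟩) - C ⟨a,ha⟩ ⟨b,hb⟩) := by ring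
          rw [e2, Vadd _ _ (neg_mem h1), Vσ]
          exact ih (a+1) (b+1) ha1 hb1 (by omega) (by omega)
      rw [VO, key (m-1-b) a b ha hb rfl (by omega)]
  refine ⟨part0, partAdd, partNeg, partO, part2, ?_, ?_⟩
  · -- Part (3a)
    intro C₁ h₁ C₂ h₂
    constructor
    · intro hcls
      have hD : C₁ - C₂ ∈ S := by
        have h3 := partAdd C₁ h₁ (-C₂) (partNeg C₂ h₂)
        rwa [← sub_eq_add_neg] at h3
      intro i j
      refine hchain (C₁ - C₂) hD ?_ i j
      intro a ha ha1
      have h4 := hcls ⟨a, by omega⟩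
      rw [QuotientAddGroup.eq_iff_sub_mem] at h4
      have h5 : (C₁ - C₂) ⟨a, ha⟩ ⟨m-1, hm1⟩
          = C₁ (Fin.castLE (by omega : n-1 ≤ n) ⟨a, by omega⟩) ⟨m-1, hm1⟩
            - C₂ (Fin.castLE (by omega : n-1 ≤ n) ⟨a, by omega⟩) ⟨m-1, hm1⟩ := by
        rw [Matrix.sub_apply]
        rfl
      rw [h5]
      exact h4
    · intro hsub i
      rw [QuotientAddGroup.eq_iff_sub_mem]
      have h4 := hsub (Fin.castLE (by omega : n-1 ≤ n) i) ⟨m-1, hm1⟩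
      rw [Matrix.sub_apply] at h4
      exact h4
  · -- Part (3b)
    intro y hy
    choose rep hrepO hrepy using hy
    classical
    set d : ℕ → L := fun i => if h : i < n-1 then rep ⟨i, h⟩ else 0 with hd
    have hdO : ∀ i : ℕ, t * d i ∈ O := by
      intro i
      simp only [hd]
      split
      · next h => exact (htinv_mem _).1 (hrepO ⟨i, h⟩)
      · rw [mul_zero]; exact O.zero_mem
    set CC : Matrix (Fin n) (Fin m) L := Matrix.of (fun p q =>
        if m + (p : ℕ) < (q : ℕ) + n then (⇑σ)^[m-1-(q:ℕ)] (d (m-1-(q:ℕ)+(p:ℕ))) else 0)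
      with hCC
    have hCCapp : ∀ (a b : ℕ) (ha : a < n) (hb : b < m),
        CC ⟨a, ha⟩ ⟨b, hb⟩ = if m + a < b + n then (⇑σ)^[m-1-b] (d (m-1-b+a)) else 0 := by
      intro a b ha hb; rfl
    have hvviter : ∀ (k : ℕ) (x : L), vvv v ((⇑σ)^[k] x) = vvv v x := by
      intro k
      induction k with
      | zero => intro x; rfl
      | succ k ih => intro x; rw [Function.iterate_succ_apply, ih, Vσ]
    have htiter : ∀ (k : ℕ) (x : L), t * x ∈ O → t * (⇑σ)^[k] x ∈ O := by
      intro k x hx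
      rw [VO, Vt, hvviter]
      rw [VO, Vt] at hx
      exact hx
    have hCCS : CC ∈ S := by
      apply hSin
      · intro i j
        obtain ⟨a, ha⟩ := i
        obtain ⟨b, hb⟩ := j
        rw [entry_formula t hn0 hm0 σ CC ⟨a, ha⟩ ⟨b, hb⟩]
        dsimp only
        by_cases hA : a + 1 < n
        · rw [dif_pos hA]
          by_cases hB : 0 < b
          · rw [dif_pos hB, hCCapp (a+1) b hA hb,
              hCCapp a (b-1) ha (by omega)]
            by_cases hP : m + (a+1) < b + n
            · rw [if_pos hP, if_pos (show m + a < (b-1) + n by omega)]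
              have e2 : m-1-(b-1) = (m-1-b) + 1 := by omega
              rw [e2]
              have e3 : m-1-b+1+a = m-1-b+(a+1) := by omega
              rw [e3, Function.iterate_succ_apply']
              rw [sub_self]
              exact O.zero_mem
            · rw [if_neg hP, if_neg (show ¬(m + a < (b-1) + n) by omega), map_zero, sub_zero]
              exact O.zero_mem
          · rw [dif_neg hB, hCCapp (a+1) b hA hb, hCCapp a (m-1) ha hm1]
            rw [if_neg (show ¬(m + (a+1) < b + n) by omega),
              if_pos (show m + a < (m-1) + n by omega), map_zero]
            have e2 : m-1-(m-1) = 0 := by omega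
            rw [e2, Function.iterate_zero_apply, Nat.zero_add, zero_sub]
            refine neg_mem ?_
            rw [mul_comm]
            exact hdO a
        · rw [dif_neg hA]
          by_cases hB : 0 < b
          · rw [dif_pos hB, hCCapp 0 b hn0 hb, hCCapp a (b-1) ha (by omega)]
            rw [if_neg (show ¬(m + a < (b-1) + n) by omega), sub_zero]
            by_cases hP : m + 0 < b + n
            · rw [if_pos hP, ← Function.iterate_succ_apply' ⇑σ (m-1-b) (d (m-1-b+0))]
              exact htiter _ _ (hdO _)
            · rw [if_neg hP, map_zero, mul_zero]
              exact O.zero_mem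
          · rw [dif_neg hB, hCCapp 0 b hn0 hb, hCCapp a (m-1) ha hm1]
            rw [if_neg (show ¬(m + 0 < b + n) by omega),
              if_neg (show ¬(m + a < (m-1) + n) by omega),
              map_zero, mul_zero, zero_mul, sub_zero]
            exact O.zero_mem
      · rw [entryD t hn0 hm0 σ CC hn1]
        rw [hCCapp 0 0 hn0 hm0, hCCapp (n-1) (m-1) hn1 hm1]
        rw [if_neg (show ¬(m + 0 < 0 + n) by omega),
          if_neg (show ¬(m + (n-1) < (m-1) + n) by omega),
          map_zero, mul_zero, zero_mul, sub_zero]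
        exact htsmul0
    refine ⟨CC, hCCS, ?_⟩
    intro i
    obtain ⟨a, ha⟩ := i
    have e : CC (Fin.castLE (by omega : n-1 ≤ n) ⟨a, ha⟩) ⟨m-1, hm1⟩ = rep ⟨a, ha⟩ := by
      have e0 : CC (Fin.castLE (by omega : n-1 ≤ n) ⟨a, ha⟩) ⟨m-1, hm1⟩
          = CC ⟨a, by omega⟩ ⟨m-1, hm1⟩ := rfl
      rw [e0, hCCapp a (m-1) (by omega) hm1, if_pos (show m + a < (m-1) + n by omega)]
      have e2 : m-1-(m-1) = 0 := by omega
      rw [e2, Function.iterate_zero_apply, Nat.zero_add]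
      simp only [hd]
      rw [dif_pos ha]
    rw [e]
    exact hrepy ⟨a, ha⟩
end

section
/- Let n, m ≥ 2, let p_1 ∈ {1, n−1}, p_2 ∈ {1, m−1}, and let q_1, q_2 be integers with q_1 ≠ q_2. Set M_1 = t^{q_1}·τ_n^{p_1} ∈ GL_n(L) and M_2 = t^{q_2}·τ_m^{p_2} ∈ GL_m(L); these are monomial matrices. For 1 ≤ i ≤ n let α_i = v(unique nonzero entry of row i of M_1), and for 1 ≤ j ≤ m let β_j = v(unique nonzero entry of column j of M_2). If C ∈ M_{n×m}(L) satisfies, for all (i,j), that the (i,j)-entry of M_1·σ(C) − C·M_2 is either 0 or has valuation ≥ min{α_i, β_j}, then every entry of C lies in 𝒪_L. -/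
lemma tau_apply {L : Type*} [Field L] (t : L) (r : ℕ) (i j : Fin r) :
    tau t r i j =
      if (i : ℕ) + 1 = (j : ℕ) then 1 else if (i : ℕ) = r - 1 ∧ (j : ℕ) = 0 then t else 0 :=
  rfl

lemma tau_pow_apply {L : Type*} [Field L] (t : L) (r : ℕ) (hr : 0 < r) :
    ∀ p, p ≤ r → ∀ i j : Fin r, (tau t r ^ p) i j =
      if (i : ℕ) + p < r then (if (j : ℕ) = (i : ℕ) + p then 1 else 0)
      else if (j : ℕ) + r = (i : ℕ) + p then t else 0 := by
  intro p
  induction p with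
  | zero =>
    intro _ i j
    have hi : (i : ℕ) < r := i.isLt
    rw [pow_zero, Matrix.one_apply]
    have : (i = j) ↔ ((j : ℕ) = (i : ℕ) + 0) := by
      rw [Fin.ext_iff]; omega
    split_ifs with h1 h2 h3 <;> first | rfl | omega | (exact absurd (this.mp h1) h3) |
      (exact absurd (this.mpr h3) h1)
  | succ p ih =>
    intro hpr i j
    have hi : (i : ℕ) < r := i.isLt
    have hj : (j : ℕ) < r := j.isLt
    rw [pow_succ', Matrix.mul_apply]
    by_cases hcase : (i : ℕ) + 1 < r
    · rw [Finset.sum_eq_single (⟨(i : ℕ) + 1, hcase⟩ : Fin r)]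
      · rw [tau_apply, ih (by omega)]
        clear ih
        simp only [Fin.val_mk]
        split_ifs <;> first | rfl | omega | ring1 | contradiction | (simp_all; omega) | simp_all
      · intro k _ hk
        have hkk : (k : ℕ) ≠ (i : ℕ) + 1 := fun hc => hk (Fin.ext hc)
        have hz : tau t r i k = 0 := by
          rw [tau_apply]
          split_ifs <;> first | rfl | omega
        rw [hz, zero_mul]
      · intro h; exact absurd (Finset.mem_univ _) h
    · rw [Finset.sum_eq_single (⟨0, hr⟩ : Fin r)]
      · rw [tau_apply, ih (by omega)]
        clear ih
        simp only [Fin.val_mk]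
        split_ifs <;> first | rfl | omega | ring1 | contradiction | (simp_all; omega) | simp_all
      · intro k _ hk
        have hkk : (k : ℕ) ≠ 0 := fun hc => hk (Fin.ext hc)
        have hz : tau t r i k = 0 := by
          rw [tau_apply]
          split_ifs <;> first | rfl | omega
        rw [hz, zero_mul]
      · intro h; exact absurd (Finset.mem_univ _) h


lemma modd (a r : ℕ) (hr : 0 < r) (h : a < 2*r) :
    a % r = (if a < r then a else a - r) ∧ a / r = (if a < r then 0 else 1) := by
  by_cases h' : a < r
  · simp [h', Nat.mod_eq_of_lt h', Nat.div_eq_of_lt h']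
  · have h1 : r ≤ a := le_of_not_gt h'
    rw [if_neg h', if_neg h']
    constructor
    · rw [Nat.mod_eq_sub_mod h1, Nat.mod_eq_of_lt (by omega)]
    · rw [Nat.div_eq_sub_div hr h1, Nat.div_eq_of_lt (by omega)]

lemma walk_lemma {L : Type*} [Zero L] (v : L → ℤ) {X : Type*} (f : X → L) (s : X → X) (d : X → ℤ)
    (hd : ∀ x, 0 ≤ d x)
    (hstep : ∀ x c, c ≤ 0 → (f x = 0 ∨ c ≤ v (f x)) →
      (f (s x) = 0 ∨ min (c + d x) 0 ≤ v (f (s x))))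
    (x₀ : X) (K : ℕ) (hK : s^[K] x₀ = x₀)
    (hD : 0 < ∑ k ∈ Finset.range K, d (s^[k] x₀))
    (h0 : f x₀ ≠ 0) : 0 ≤ v (f x₀) := by
  by_contra hneg
  push_neg at hneg
  set w := v (f x₀) with hw
  have main : ∀ k, f (s^[k] x₀) = 0 ∨
      min (w + ∑ l ∈ Finset.range k, d (s^[l] x₀)) 0 ≤ v (f (s^[k] x₀)) := by
    intro k; induction k with
    | zero =>
      right; simp only [Function.iterate_zero, id_eq, Finset.range_zero, Finset.sum_empty]
      omega
    | succ k ih =>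
      have h1 := hstep (s^[k] x₀) (min (w + ∑ l ∈ Finset.range k, d (s^[l] x₀)) 0) (by omega) ih
      rw [Function.iterate_succ_apply']
      rcases h1 with h | h
      · exact Or.inl h
      · right
        refine le_trans ?_ h
        rw [Finset.sum_range_succ]
        have := hd (s^[k] x₀)
        omega
  have hmK := main K
  rw [hK] at hmK
  rcases hmK with h | h
  · exact h0 h
  · omega

def sfun (n m u w : ℕ) (hn : 0 < n) (hm : 0 < m) (x : Fin n × Fin m) : Fin n × Fin m :=
  (⟨((x.1 : ℕ) + u) % n, Nat.mod_lt _ hn⟩, ⟨((x.2 : ℕ) + w) % m, Nat.mod_lt _ hm⟩)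

lemma div_step (a w m : ℕ) (hm : 0 < m) (hw : w < m) :
    (a + w) / m = a / m + (if m ≤ a % m + w then 1 else 0) := by
  have hlt : a % m < m := Nat.mod_lt _ hm
  obtain ⟨-, hm2⟩ := modd (a % m + w) m hm (by omega)
  have h3 := Nat.div_add_mod a m
  have h4 : a + w = m * (a / m) + (a % m + w) := by omega
  rw [h4, Nat.mul_add_div hm, hm2]
  split_ifs <;> omega

lemma core {L : Type*} [Field L] (v : L → ℤ) (n m u w : ℕ) (e : ℤ)
    (hn : 0 < n) (hm : 0 < m) (hu1 : 1 ≤ u) (hu2 : u < n) (hw1 : 1 ≤ w) (hw2 : w < m)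
    (he : 1 ≤ e)
    (f : Fin n × Fin m → L)
    (hstep : ∀ (x : Fin n × Fin m) (c : ℤ), c ≤ 0 → (f x = 0 ∨ c ≤ v (f x)) →
      (f (sfun n m u w hn hm x) = 0 ∨
        min (c + (e + (if m ≤ (x.2 : ℕ) + w then 1 else 0)
          - (if n ≤ (x.1 : ℕ) + u then 1 else 0))) 0 ≤ v (f (sfun n m u w hn hm x))))
    (x₀ : Fin n × Fin m) (h0 : f x₀ ≠ 0) : 0 ≤ v (f x₀) := by
  obtain ⟨i₀, j₀⟩ := x₀
  set d : Fin n × Fin m → ℤ := fun x =>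
    e + (if m ≤ (x.2 : ℕ) + w then 1 else 0) - (if n ≤ (x.1 : ℕ) + u then 1 else 0) with hd_def
  have hd : ∀ x, 0 ≤ d x := by
    intro x; simp only [hd_def]; split_ifs <;> omega
  have hiter : ∀ k, (sfun n m u w hn hm)^[k] (i₀, j₀) =
      (⟨((i₀ : ℕ) + k*u) % n, Nat.mod_lt _ hn⟩, ⟨((j₀ : ℕ) + k*w) % m, Nat.mod_lt _ hm⟩) := by
    intro k; induction k with
    | zero =>
      simp only [Function.iterate_zero, id_eq, Nat.zero_mul, Nat.add_zero]
      refine Prod.ext ?_ ?_ <;> apply Fin.ext <;> simp only [Fin.val_mk] <;>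
        rw [Nat.mod_eq_of_lt (Fin.is_lt _)]
    | succ k ih =>
      rw [Function.iterate_succ_apply', ih]
      simp only [sfun]
      refine Prod.ext ?_ ?_ <;> apply Fin.ext <;> simp only [Fin.val_mk] <;>
        rw [Nat.mod_add_mod] <;> congr 1 <;> ring
  have hK : (sfun n m u w hn hm)^[n*m] (i₀, j₀) = (i₀, j₀) := by
    rw [hiter]
    refine Prod.ext ?_ ?_ <;> apply Fin.ext <;> simp only [Fin.val_mk]
    · rw [show (i₀ : ℕ) + (n*m)*u = (i₀ : ℕ) + n*(m*u) by ring,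
        Nat.add_mul_mod_self_left, Nat.mod_eq_of_lt (Fin.is_lt _)]
    · rw [show (j₀ : ℕ) + (n*m)*w = (j₀ : ℕ) + m*(n*w) by ring,
        Nat.add_mul_mod_self_left, Nat.mod_eq_of_lt (Fin.is_lt _)]
  set F : ℕ → ℤ := fun k => (((j₀ : ℕ) + k*w)/m : ℕ) with hF_def
  set G : ℕ → ℤ := fun k => (((i₀ : ℕ) + k*u)/n : ℕ) with hG_def
  have hdk : ∀ k ∈ Finset.range (n*m), d ((sfun n m u w hn hm)^[k] (i₀, j₀)) =
      e + (F (k+1) - F k) - (G (k+1) - G k) := by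
    intro k _
    rw [hiter k]
    simp only [hd_def, hF_def, hG_def, Fin.val_mk]
    have hF1 : ((j₀ : ℕ) + (k+1)*w) = ((j₀ : ℕ) + k*w) + w := by ring
    have hG1 : ((i₀ : ℕ) + (k+1)*u) = ((i₀ : ℕ) + k*u) + u := by ring
    rw [hF1, hG1, div_step _ _ _ hm hw2, div_step _ _ _ hn hu2]
    push_cast
    split_ifs <;> omega
  have hsum : ∑ k ∈ Finset.range (n*m), d ((sfun n m u w hn hm)^[k] (i₀, j₀)) =
      (n*m : ℤ) * e + (F (n*m) - F 0) - (G (n*m) - G 0) := by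
    rw [Finset.sum_congr rfl hdk]
    rw [Finset.sum_sub_distrib, Finset.sum_add_distrib, Finset.sum_const,
      Finset.sum_range_sub F, Finset.sum_range_sub G, Finset.card_range]
    push_cast; ring
  have hF0 : F 0 = 0 := by
    simp only [hF_def, Nat.zero_mul, Nat.add_zero]
    rw [Nat.div_eq_of_lt (Fin.is_lt _)]; simp
  have hG0 : G 0 = 0 := by
    simp only [hG_def, Nat.zero_mul, Nat.add_zero]
    rw [Nat.div_eq_of_lt (Fin.is_lt _)]; simp
  have hFK : F (n*m) = (n : ℤ) * w := by
    simp only [hF_def]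
    rw [show (j₀ : ℕ) + (n*m)*w = (j₀ : ℕ) + m*(n*w) by ring,
      Nat.add_mul_div_left _ _ hm, Nat.div_eq_of_lt (Fin.is_lt _), Nat.zero_add]
    push_cast; ring
  have hGK : G (n*m) = (m : ℤ) * u := by
    simp only [hG_def]
    rw [show (i₀ : ℕ) + (n*m)*u = (i₀ : ℕ) + n*(m*u) by ring,
      Nat.add_mul_div_left _ _ hn, Nat.div_eq_of_lt (Fin.is_lt _), Nat.zero_add]
    push_cast; ring
  have hD : 0 < ∑ k ∈ Finset.range (n*m), d ((sfun n m u w hn hm)^[k] (i₀, j₀)) := by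
    rw [hsum, hF0, hG0, hFK, hGK]
    have h1 : (0:ℤ) ≤ (e - 1) * ((n:ℤ) * m) := by
      apply mul_nonneg (by omega)
      positivity
    have h2 : (m:ℤ) * u ≤ (m:ℤ) * ((n:ℤ) - 1) :=
      mul_le_mul_of_nonneg_left (by push_cast; omega) (by positivity)
    have h3 : (n:ℤ) * 1 ≤ (n:ℤ) * w :=
      mul_le_mul_of_nonneg_left (by push_cast; omega) (by positivity)
    have h4 : (0:ℤ) < m := by positivity
    nlinarith [h1, h2, h3, h4]
  exact walk_lemma v f (sfun n m u w hn hm) d hd hstep (i₀, j₀) (n*m) hK hD h0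


section Val
variable {L : Type*} [Field L] (v : L → ℤ) (t : L)
variable (hv_mul : ∀ x y : L, x ≠ 0 → y ≠ 0 → v (x * y) = v x + v y)
variable (hv_add : ∀ x y : L, x ≠ 0 → y ≠ 0 → x + y ≠ 0 → min (v x) (v y) ≤ v (x + y))
variable (ht0 : t ≠ 0) (ht1 : v t = 1)

include hv_mul in
lemma v_one : v 1 = 0 := by
  have h := hv_mul 1 1 one_ne_zero one_ne_zero
  rw [one_mul] at h
  omega

include hv_mul in
lemma v_neg (x : L) (hx : x ≠ 0) : v (-x) = v x := by
  have hm : v (-1 : L) = 0 := by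
    have h := hv_mul (-1) (-1) (by norm_num) (by norm_num)
    rw [neg_mul_neg, one_mul] at h
    have := v_one v hv_mul
    omega
  have h := hv_mul (-1) x (by norm_num) hx
  rw [neg_one_mul] at h
  omega

include hv_mul ht0 ht1 in
lemma v_zpow : ∀ z : ℤ, v (t ^ z) = z := by
  have hnat : ∀ k : ℕ, v (t ^ k) = k := by
    intro k
    induction k with
    | zero => simpa using v_one v hv_mul
    | succ k ih =>
      rw [pow_succ, hv_mul _ _ (pow_ne_zero _ ht0) ht0, ih, ht1]
      push_cast; ring
  intro z
  rcases z.eq_nat_or_neg with ⟨k, hk | hk⟩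
  · subst hk; rw [zpow_natCast, hnat]
  · subst hk
    have h1 : (t ^ (-(k:ℤ))) * t ^ (k:ℤ) = 1 := by
      rw [← zpow_add₀ ht0]; simp
    have h2 := hv_mul (t ^ (-(k:ℤ))) (t ^ (k:ℤ)) (zpow_ne_zero _ ht0) (zpow_ne_zero _ ht0)
    rw [h1, v_one v hv_mul, zpow_natCast] at h2
    rw [hnat] at h2
    omega

include hv_mul hv_add ht0 ht1 in
lemma key_step (a b : ℤ) (y z : L)
    (hOr : t ^ a * y - t ^ b * z = 0 ∨ min a b ≤ v (t ^ a * y - t ^ b * z))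
    (c₀ : ℤ) (hc₀ : c₀ ≤ 0) (hy : y = 0 ∨ c₀ ≤ v y) (hz : z ≠ 0) :
    min (c₀ + (a - b)) 0 ≤ v z := by
  have hta : (t : L) ^ a ≠ 0 := zpow_ne_zero _ ht0
  have htb : (t : L) ^ b ≠ 0 := zpow_ne_zero _ ht0
  have hvtz : v (t ^ b * z) = b + v z := by
    rw [hv_mul _ _ htb hz, v_zpow v t hv_mul ht0 ht1]
  by_cases hy0 : y = 0
  · subst hy0
    rw [mul_zero, zero_sub] at hOr
    have hne : t ^ b * z ≠ 0 := mul_ne_zero htb hz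
    rcases hOr with h | h
    · exact absurd (neg_eq_zero.mp h) hne
    · rw [v_neg v hv_mul _ hne, hvtz] at h
      omega
  · have hcy : c₀ ≤ v y := hy.resolve_left hy0
    have hvty : v (t ^ a * y) = a + v y := by
      rw [hv_mul _ _ hta hy0, v_zpow v t hv_mul ht0 ht1]
    by_cases hd : t ^ a * y - t ^ b * z = 0
    · have heq : t ^ a * y = t ^ b * z := by linear_combination hd
      rw [← heq, hvty] at hvtz
      omega
    · have hval : min a b ≤ v (t ^ a * y - t ^ b * z) := hOr.resolve_left hd
      have hsum : t ^ a * y + -(t ^ a * y - t ^ b * z) = t ^ b * z := by ring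
      have hadd := hv_add (t ^ a * y) (-(t ^ a * y - t ^ b * z))
        (mul_ne_zero hta hy0) (neg_ne_zero.mpr hd) (by rw [hsum]; exact mul_ne_zero htb hz)
      rw [hsum, v_neg v hv_mul _ hd, hvtz, hvty] at hadd
      omega

end Val


/-- The layered Drinfeld case `q_1 ≠ q_2`: for `M_1 = t^{q_1} τ_n^{p_1}`,
`M_2 = t^{q_2} τ_m^{p_2}` (monomial matrices, with row valuations `α_i` of `M_1` and column
valuations `β_j` of `M_2`), if each entry of `M_1 σ(C) − C M_2` is `0` or has valuation
`≥ min{α_i, β_j}`, then all entries of `C` are integral. -/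
theorem stmt_10 {L : Type*} [Field L] (v : L → ℤ) (t : L)
    (hv_mul : ∀ x y : L, x ≠ 0 → y ≠ 0 → v (x * y) = v x + v y)
    (hv_add : ∀ x y : L, x ≠ 0 → y ≠ 0 → x + y ≠ 0 → min (v x) (v y) ≤ v (x + y))
    (hv_surj : ∀ n : ℤ, ∃ x : L, x ≠ 0 ∧ v x = n)
    (ht0 : t ≠ 0) (ht1 : v t = 1)
    (O : Subring L) (hO : ∀ x : L, x ∈ O ↔ x = 0 ∨ 0 ≤ v x)
    (σ : L ≃+* L) (hσt : σ t = t) (hσv : ∀ x : L, x ≠ 0 → v (σ x) = v x)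
    (n m : ℕ) (hn : 2 ≤ n) (hm : 2 ≤ m)
    (p₁ p₂ : ℕ) (hp₁ : p₁ = 1 ∨ p₁ = n - 1) (hp₂ : p₂ = 1 ∨ p₂ = m - 1)
    (q₁ q₂ : ℤ) (hq : q₁ ≠ q₂)
    (M₁ : Matrix (Fin n) (Fin n) L) (hM₁ : M₁ = t ^ q₁ • tau t n ^ p₁)
    (M₂ : Matrix (Fin m) (Fin m) L) (hM₂ : M₂ = t ^ q₂ • tau t m ^ p₂)
    -- `α_i` is the valuation of the unique nonzero entry of row `i` of `M₁`
    (α : Fin n → ℤ) (hα : ∀ i j, M₁ i j ≠ 0 → v (M₁ i j) = α i)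
    (hα' : ∀ i, ∃ j, M₁ i j ≠ 0)
    -- `β_j` is the valuation of the unique nonzero entry of column `j` of `M₂`
    (β : Fin m → ℤ) (hβ : ∀ i j, M₂ i j ≠ 0 → v (M₂ i j) = β j)
    (hβ' : ∀ j, ∃ i, M₂ i j ≠ 0)
    (C : Matrix (Fin n) (Fin m) L)
    (hC : ∀ i j, (M₁ * C.map ⇑σ - C * M₂) i j = 0 ∨
        min (α i) (β j) ≤ v ((M₁ * C.map ⇑σ - C * M₂) i j)) :
    ∀ i j, C i j ∈ O := by
  have hn0 : 0 < n := by omega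
  have hm0 : 0 < m := by omega
  have hp₁' : 1 ≤ p₁ ∧ p₁ < n := by rcases hp₁ with h | h <;> omega
  have hp₂' : 1 ≤ p₂ ∧ p₂ < m := by rcases hp₂ with h | h <;> omega
  set π : Fin n → Fin n := fun i => ⟨((i : ℕ) + p₁) % n, Nat.mod_lt _ hn0⟩ with hπ_def
  set ρ : Fin m → Fin m := fun j => ⟨((j : ℕ) + (m - p₂)) % m, Nat.mod_lt _ hm0⟩ with hρ_def
  set A : Fin n → ℤ := fun i => q₁ + (if n ≤ (i : ℕ) + p₁ then 1 else 0) with hA_def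
  set B : Fin m → ℤ := fun j => q₂ + (if (j : ℕ) < p₂ then 1 else 0) with hB_def
  -- entry formulas
  have hM1e : ∀ i k : Fin n, M₁ i k =
      if ((i : ℕ) + p₁) % n = (k : ℕ) then t ^ (A i) else 0 := by
    intro i k
    rw [hM₁, Matrix.smul_apply, tau_pow_apply t n hn0 p₁ (by omega)]
    obtain ⟨hmod, -⟩ := modd ((i : ℕ) + p₁) n hn0 (by have := i.isLt; omega)
    rw [hmod]
    simp only [hA_def, smul_eq_mul]
    split_ifs <;> first | (exfalso; omega) |
      simp [zpow_add_one₀ ht0] | (rw [mul_one, add_zero])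
  have hM2e : ∀ k j : Fin m, M₂ k j =
      if ((k : ℕ) + p₂) % m = (j : ℕ) then t ^ (q₂ + (if m ≤ (k : ℕ) + p₂ then 1 else 0) : ℤ) else 0 := by
    intro k j
    rw [hM₂, Matrix.smul_apply, tau_pow_apply t m hm0 p₂ (by omega)]
    obtain ⟨hmod, -⟩ := modd ((k : ℕ) + p₂) m hm0 (by have := k.isLt; omega)
    rw [hmod]
    simp only [smul_eq_mul, mul_one]
    split_ifs <;> first | (exfalso; omega) |
      simp [zpow_add_one₀ ht0] | (rw [mul_one, add_zero])
  have hM1π : ∀ i, M₁ i (π i) = t ^ (A i) := by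
    intro i
    rw [hM1e i (π i)]
    simp only [hπ_def, Fin.val_mk]
    simp only [if_true, eq_self_iff_true]
  have hM1z : ∀ (i k : Fin n), k ≠ π i → M₁ i k = 0 := by
    intro i k hk
    rw [hM1e i k]
    apply if_neg
    intro hc
    exact hk (Fin.ext (by simp only [hπ_def, Fin.val_mk]; omega))
  have hρval : ∀ j : Fin m, ((j : ℕ) + (m - p₂)) % m =
      if (j : ℕ) < p₂ then (j : ℕ) + (m - p₂) else (j : ℕ) - p₂ := by
    intro j
    obtain ⟨hmod, -⟩ := modd ((j : ℕ) + (m - p₂)) m hm0 (by have := j.isLt; omega)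
    rw [hmod]
    split_ifs <;> omega
  have hρc : ∀ j : Fin m, ((ρ j : Fin m) : ℕ) = ((j : ℕ) + (m - p₂)) % m := fun j => rfl
  have hM2ρ : ∀ j, M₂ (ρ j) j = t ^ (B j) := by
    intro j
    have hj := j.isLt
    have hv := hρval j
    rw [hM2e (ρ j) j]
    have hc : ((((j : ℕ) + (m - p₂)) % m) + p₂) % m = (j : ℕ) := by
      by_cases h : (j : ℕ) < p₂
      · rw [hv, if_pos h, show (j : ℕ) + (m - p₂) + p₂ = (j : ℕ) + m by omega,
          Nat.add_mod_right, Nat.mod_eq_of_lt hj]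
      · rw [hv, if_neg h, show (j : ℕ) - p₂ + p₂ = (j : ℕ) by omega, Nat.mod_eq_of_lt hj]
    rw [if_pos hc]
    have hBe : (q₂ + (if m ≤ (((j : ℕ) + (m - p₂)) % m) + p₂ then 1 else 0) : ℤ) = B j := by
      simp only [hB_def]
      by_cases h : (j : ℕ) < p₂
      · rw [if_pos h, if_pos (by rw [hv, if_pos h]; omega)]
      · rw [if_neg h, if_neg (by rw [hv, if_neg h]; omega)]
    rw [hBe]
  have hM2z : ∀ (j k : Fin m), k ≠ ρ j → M₂ k j = 0 := by
    intro j k hk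
    have hv := hρval j
    rw [hM2e k j]
    apply if_neg
    intro hc
    apply hk
    apply Fin.ext
    rw [hρc j, hρval j]
    obtain ⟨hmod, -⟩ := modd ((k : ℕ) + p₂) m hm0 (by have := k.isLt; omega)
    rw [hmod] at hc
    have h1 := j.isLt
    have h2 := k.isLt
    by_cases h3 : (k : ℕ) + p₂ < m
    · rw [if_pos h3] at hc
      rw [if_neg (by omega)]
      omega
    · rw [if_neg h3] at hc
      rw [if_pos (by omega)]
      omega
  have hαA : ∀ i, α i = A i := by
    intro i
    have h := hα i (π i) (by rw [hM1π i]; exact zpow_ne_zero _ ht0)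
    rw [hM1π i, v_zpow v t hv_mul ht0 ht1] at h
    omega
  have hβB : ∀ j, β j = B j := by
    intro j
    have h := hβ (ρ j) j (by rw [hM2ρ j]; exact zpow_ne_zero _ ht0)
    rw [hM2ρ j, v_zpow v t hv_mul ht0 ht1] at h
    omega
  have hEntry : ∀ i j, (M₁ * C.map ⇑σ - C * M₂) i j =
      t ^ (A i) * σ (C (π i) j) - t ^ (B j) * C i (ρ j) := by
    intro i j
    rw [Matrix.sub_apply, Matrix.mul_apply, Matrix.mul_apply,
      Finset.sum_eq_single (π i) (fun k _ hk => by rw [hM1z i k hk, zero_mul])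
        (fun h => absurd (Finset.mem_univ _) h),
      Finset.sum_eq_single (ρ j) (fun k _ hk => by rw [hM2z j k hk, mul_zero])
        (fun h => absurd (Finset.mem_univ _) h),
      hM1π, hM2ρ, Matrix.map_apply]
    ring
  have hCond : ∀ i j, (t ^ (A i) * σ (C (π i) j) - t ^ (B j) * C i (ρ j) = 0 ∨
      min (A i) (B j) ≤ v (t ^ (A i) * σ (C (π i) j) - t ^ (B j) * C i (ρ j))) := by
    intro i j
    have h := hC i j
    rw [hEntry i j, hαA i, hβB j] at h
    exact h
  intro i j
  rw [hO]
  by_cases h0 : C i j = 0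
  · exact Or.inl h0
  right
  rcases lt_or_gt_of_ne hq with hlt | hgt
  · -- q₁ < q₂
    refine core v n m p₁ p₂ (q₂ - q₁) hn0 hm0 (by omega) (by omega) (by omega) (by omega)
      (by omega) (fun x => C x.1 x.2) ?_ (i, j) h0
    intro x c hc hx
    by_cases hz : C (sfun n m p₁ p₂ hn0 hm0 x).1 (sfun n m p₁ p₂ hn0 hm0 x).2 = 0
    · exact Or.inl hz
    right
    set x' := sfun n m p₁ p₂ hn0 hm0 x with hx'_def
    have hπs : π x.1 = x'.1 := Fin.ext rfl
    have hρs : ρ x'.2 = x.2 := by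
      apply Fin.ext
      show (((x'.2 : ℕ)) + (m - p₂)) % m = (x.2 : ℕ)
      have hs2 : (x'.2 : ℕ) = ((x.2 : ℕ) + p₂) % m := rfl
      rw [hs2, Nat.mod_add_mod,
        show (x.2 : ℕ) + p₂ + (m - p₂) = (x.2 : ℕ) + m by omega,
        Nat.add_mod_right, Nat.mod_eq_of_lt x.2.isLt]
    have hcond := hCond x.1 x'.2
    rw [hπs, hρs] at hcond
    have hOr' : t ^ (B x'.2) * (C x.1 x.2) - t ^ (A x.1) * (σ (C x'.1 x'.2)) = 0 ∨
        min (B x'.2) (A x.1) ≤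
          v (t ^ (B x'.2) * (C x.1 x.2) - t ^ (A x.1) * (σ (C x'.1 x'.2))) := by
      have hneg : t ^ (B x'.2) * (C x.1 x.2) - t ^ (A x.1) * (σ (C x'.1 x'.2)) =
          -(t ^ (A x.1) * σ (C x'.1 x'.2) - t ^ (B x'.2) * C x.1 x.2) := by ring
      by_cases hd0 : t ^ (A x.1) * σ (C x'.1 x'.2) - t ^ (B x'.2) * C x.1 x.2 = 0
      · left; rw [hneg, hd0, neg_zero]
      · right
        rw [hneg, v_neg v hv_mul _ hd0, min_comm]
        exact hcond.resolve_left hd0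
    have hzσ : σ (C x'.1 x'.2) ≠ 0 := by
      simp only [ne_eq, EmbeddingLike.map_eq_zero_iff]
      exact hz
    have hres := key_step v t hv_mul hv_add ht0 ht1 (B x'.2) (A x.1) (C x.1 x.2)
      (σ (C x'.1 x'.2)) hOr' c hc hx hzσ
    rw [hσv _ hz] at hres
    have hAB : B x'.2 - A x.1 = (q₂ - q₁) + (if m ≤ (x.2 : ℕ) + p₂ then 1 else 0)
        - (if n ≤ (x.1 : ℕ) + p₁ then 1 else 0) := by
      simp only [hA_def, hB_def]
      have hs2 : (x'.2 : ℕ) = ((x.2 : ℕ) + p₂) % m := rfl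
      obtain ⟨hmod, -⟩ := modd ((x.2 : ℕ) + p₂) m hm0 (by have := x.2.isLt; omega)
      rw [hs2, hmod]
      have := x.2.isLt
      split_ifs <;> omega
    rw [hAB] at hres
    exact hres
  · -- q₂ < q₁
    refine core v n m (n - p₁) (m - p₂) (q₁ - q₂) hn0 hm0 (by omega) (by omega) (by omega)
      (by omega) (by omega) (fun x => C x.1 x.2) ?_ (i, j) h0
    intro x c hc hx
    by_cases hz : C (sfun n m (n - p₁) (m - p₂) hn0 hm0 x).1
        (sfun n m (n - p₁) (m - p₂) hn0 hm0 x).2 = 0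
    · exact Or.inl hz
    right
    set x' := sfun n m (n - p₁) (m - p₂) hn0 hm0 x with hx'_def
    have hπs : π x'.1 = x.1 := by
      apply Fin.ext
      show (((x'.1 : ℕ)) + p₁) % n = (x.1 : ℕ)
      have hs1 : (x'.1 : ℕ) = ((x.1 : ℕ) + (n - p₁)) % n := rfl
      rw [hs1, Nat.mod_add_mod,
        show (x.1 : ℕ) + (n - p₁) + p₁ = (x.1 : ℕ) + n by omega,
        Nat.add_mod_right, Nat.mod_eq_of_lt x.1.isLt]
    have hρs : ρ x.2 = x'.2 := Fin.ext rfl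
    have hcond := hCond x'.1 x.2
    rw [hπs, hρs] at hcond
    have hy : σ (C x.1 x.2) = 0 ∨ c ≤ v (σ (C x.1 x.2)) := by
      rcases hx with h | h
      · left; rw [show C x.1 x.2 = 0 from h, map_zero]
      · by_cases hcx : C x.1 x.2 = 0
        · left; rw [hcx, map_zero]
        · right; rw [hσv _ hcx]; exact h
    have hres := key_step v t hv_mul hv_add ht0 ht1 (A x'.1) (B x.2) (σ (C x.1 x.2))
      (C x'.1 x'.2) hcond c hc hy hz
    have hAB : A x'.1 - B x.2 = (q₁ - q₂) + (if m ≤ (x.2 : ℕ) + (m - p₂) then 1 else 0)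
        - (if n ≤ (x.1 : ℕ) + (n - p₁) then 1 else 0) := by
      simp only [hA_def, hB_def]
      have hs1 : (x'.1 : ℕ) = ((x.1 : ℕ) + (n - p₁)) % n := rfl
      obtain ⟨hmod, -⟩ := modd ((x.1 : ℕ) + (n - p₁)) n hn0 (by have := x.1.isLt; omega)
      rw [hs1, hmod]
      have := x.1.isLt
      have := x.2.isLt
      split_ifs <;> omega
    rw [hAB] at hres
    exact hres
end
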